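/- arXiv:1712.07867 — 2 statements merged into one kernel-verified Lean document; each statement's English description precedes it below -/
import Mathlib

section
/- Let G be a snark and let e and f be distinct edges of G. Then the I-extension G(e,f) is a snark if and only if the graph obtained from G by deleting the edges e and f admits no proper 3-edge-colouring. -/
open SimpleGraph

/-- Two edges (as unordered pairs) are adjacent: distinct and sharing a vertex. -/
def Sym2Adj {V : Type} (e f : Sym2 V) : Prop := e ≠ f ∧ ∃ v, v ∈ e ∧ v ∈ f

/-- A graph is cubic if every vertex has exactly 3 neighbours. -/
def IsCubic {V : Type} (G : SimpleGraph V) : Prop := ∀ v, Nat.card (G.neighborSet v) = 3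

/-- `G` admits a proper 3-edge-colouring. -/
def Colourable3 {V : Type} (G : SimpleGraph V) : Prop :=
  ∃ c : G.edgeSet → Fin 3, ∀ e f : G.edgeSet, Sym2Adj (e : Sym2 V) (f : Sym2 V) → c e ≠ c f

/-- A snark: a connected cubic graph with no proper 3-edge-colouring. -/
def IsSnark {V : Type} (G : SimpleGraph V) : Prop := G.Connected ∧ IsCubic G ∧ ¬ Colourable3 G

/-- `S` is a cycle-separating set of edges of `G`: at least two components of `G - S`
contain a cycle. -/
def CycleSeparating {V : Type} (G : SimpleGraph V) (S : Set (Sym2 V)) : Prop :=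
  S ⊆ G.edgeSet ∧ ∃ (u v : V) (p : (G.deleteEdges S).Walk u u) (q : (G.deleteEdges S).Walk v v),
    p.IsCycle ∧ q.IsCycle ∧ ¬ (G.deleteEdges S).Reachable u v

/-- `G` is cyclically `k`-edge-connected: no set of fewer than `k` edges is cycle-separating. -/
def CyclicallyEdgeConnected {V : Type} (G : SimpleGraph V) (k : ℕ) : Prop :=
  ∀ S : Set (Sym2 V), Nat.card S < k → ¬ CycleSeparating G S

/-- The cycle rank `β(G) = |E(G)| - |V(G)| + 1`. -/
noncomputable def cycleRank {V : Type} (G : SimpleGraph V) : ℕ :=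
  Nat.card G.edgeSet + 1 - Nat.card V

/-- The cyclic connectivity: the largest `k ≤ β(G)` such that `G` is cyclically
`k`-edge-connected. -/
noncomputable def cyclicConnectivity {V : Type} (G : SimpleGraph V) : ℕ :=
  sSup {k : ℕ | k ≤ cycleRank G ∧ CyclicallyEdgeConnected G k}

/-- `H` is a 2-factor of `G`: a spanning 2-regular subgraph. -/
def IsTwoFactor {V : Type} (G H : SimpleGraph V) : Prop :=
  H ≤ G ∧ ∀ v, Nat.card (H.neighborSet v) = 2

/-- The number of connected components of `H` with an odd number of vertices. -/
noncomputable def oddComponents {V : Type} (H : SimpleGraph V) : ℕ :=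
  Nat.card {c : H.ConnectedComponent // Odd (Nat.card c.supp)}

/-- The oddness of `G`: the minimum number of odd components over all 2-factors of `G`. -/
noncomputable def oddness {V : Type} (G : SimpleGraph V) : ℕ :=
  sInf {m : ℕ | ∃ H, IsTwoFactor G H ∧ _root_.oddComponents H = m}

/-- The set of edges of `G` with exactly one endpoint in `A`. -/
def edgeBoundary {V : Type} (G : SimpleGraph V) (A : Set V) : Set (Sym2 V) :=
  {e | e ∈ G.edgeSet ∧ ∃ u v, e = s(u, v) ∧ u ∈ A ∧ v ∉ A}

/-- A graph is bridgeless if no edge is a bridge. -/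
def Bridgeless {V : Type} (G : SimpleGraph V) : Prop := ∀ e, ¬ G.IsBridge e

/-- The resistance of `G`: the minimum number of edges to delete to obtain a
3-edge-colourable graph. -/
noncomputable def resistance {V : Type} (G : SimpleGraph V) : ℕ :=
  sInf {n : ℕ | ∃ F : Set (Sym2 V), F ⊆ G.edgeSet ∧ Nat.card F = n ∧
    Colourable3 (G.deleteEdges F)}

/-- The I-extension `G(e,f)`: subdivide `e` with a new vertex `Sum.inr 0`, subdivide `f`
with a new vertex `Sum.inr 1`, and join the two new vertices by an edge. -/
def IExtension {V : Type} (G : SimpleGraph V) (e f : Sym2 V) : SimpleGraph (V ⊕ Fin 2) :=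
  SimpleGraph.fromEdgeSet
    ((Sym2.map Sum.inl '' (G.edgeSet \ {e, f}))
      ∪ {s(Sum.inr 0, Sum.inr 1)}
      ∪ {x | ∃ v ∈ e, x = s(Sum.inl v, Sum.inr 0)}
      ∪ {x | ∃ v ∈ f, x = s(Sum.inl v, Sum.inr 1)})



namespace Snark12

abbrev K2 := ZMod 2 × ZMod 2
def phi : Fin 3 → K2 := ![(1,0),(0,1),(1,1)]
def psi : K2 → Fin 3 := fun x => if x = (0,1) then 1 else if x = (1,1) then 2 else 0

lemma phi_ne_zero : ∀ i, phi i ≠ 0 := by decide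
lemma phi_inj : ∀ i j, phi i = phi j → i = j := by decide
lemma psi_inj : ∀ x y : K2, x ≠ 0 → y ≠ 0 → psi x = psi y → x = y := by decide
lemma k_add_self : ∀ x : K2, x + x = 0 := by decide
lemma k_two : ∀ x y : K2, x≠0 → y≠0 → x≠y → x+y ≠ 0 ∧ x+y ≠ x ∧ x+y ≠ y := by decide
lemma k_exists : ∀ u v : K2, ∃ x, x ≠ 0 ∧ x ≠ u ∧ x ≠ v := by decide

/-- generic symmetric edge-value function on `V ⊕ Fin 2`. -/
def gfun {V : Type} (val : Sym2 V → K2) (hh : V → Fin 2 → K2) (T : K2) :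
    (V ⊕ Fin 2) → (V ⊕ Fin 2) → K2
  | .inl u, .inl v => val s(u,v)
  | .inl u, .inr i => hh u i
  | .inr i, .inl u => hh u i
  | .inr i, .inr j => if i = j then 0 else T

lemma gfun_symm {V : Type} (val : Sym2 V → K2) (hh : V → Fin 2 → K2) (T : K2) :
    ∀ x y, gfun val hh T x y = gfun val hh T y x := by
  rintro (u|i) (v|j) <;> simp [gfun]
  · rw [Sym2.eq_swap]
  · rcases eq_or_ne i j with h | h
    · simp [h]
    · simp [h, Ne.symm h]

/-- build a 3-edge-colouring from a nowhere-zero, locally-injective K2 edge valuation. -/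
lemma colourable_of_val {W : Type} (H : SimpleGraph W) (valH : Sym2 W → K2)
    (h0 : ∀ p q, H.Adj p q → valH s(p,q) ≠ 0)
    (h1 : ∀ p q r, H.Adj p q → H.Adj p r → q ≠ r → valH s(p,q) ≠ valH s(p,r)) :
    Colourable3 H := by
  refine ⟨fun x => psi (valH x), ?_⟩
  rintro ⟨x, hx⟩ ⟨y, hy⟩ ⟨hne, v, hvx, hvy⟩ hc
  simp only at hc hne
  obtain ⟨q, rfl⟩ := Sym2.mem_iff_exists.1 hvx
  obtain ⟨r, rfl⟩ := Sym2.mem_iff_exists.1 hvy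
  rw [SimpleGraph.mem_edgeSet] at hx hy
  have hqr : q ≠ r := fun h => hne (by rw [h])
  exact h1 v q r hx hy hqr (psi_inj _ _ (h0 _ _ hx) (h0 _ _ hy) hc)


set_option synthInstance.maxSize 2000 in
lemma k_adj : ∀ ma mw md x : K2, ma ≠ 0 → mw ≠ 0 → md ≠ 0 → x ≠ 0 → x ≠ mw → x ≠ ma →
    ma = mw + md →
    ((x + mw ≠ 0) ∧ (ma + x ≠ 0) ∧ (x ≠ x + mw) ∧ (ma + x ≠ ma) ∧ (ma + x ≠ x) ∧
     (ma + x ≠ x + mw) ∧ (ma + x ≠ md) ∧ (x + mw ≠ md) ∧ (x + mw ≠ mw) ∧ (ma ≠ x)) := by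
  decide
lemma k_eq_of_add_eq_zero : ∀ x y : K2, x + y = 0 → x = y := by decide
lemma k_sum3 : ∀ x y z : K2, x≠0 → y≠0 → z≠0 → x≠y → x≠z → y≠z → x+(y+z) = 0 := by decide
lemma k_regroup : ∀ a b c d : K2, a + (b + (c + d)) = 0 → a + b = c + d := by decide
lemma k_cd : ∀ a b c d : K2, a + (b + (c + d)) = 0 → a = b → c = d := by decide
lemma k_cd2 : ∀ a b c d : K2, a + (b + (c + d)) = 0 → c = d → a = b := by decide
set_option synthInstance.maxSize 2000 in
lemma k_disj : ∀ ma mb mc md : K2, ma≠0 → mb≠0 → mc≠0 → md≠0 → ma≠mb → mc≠md →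
    (ma + (mb + (mc + md)) = 0) →
    (ma+mb ≠ 0 ∧ ma+mb ≠ ma ∧ ma+mb ≠ mb ∧ ma+mb ≠ mc ∧ ma+mb ≠ md) := by decide
lemma fin2_cases : ∀ j : Fin 2, j = 0 ∨ j = 1 := by decide

lemma handshake {V : Type} [Fintype V] (G' : SimpleGraph V) [DecidableRel G'.Adj]
    (val : Sym2 V → K2) :
    ∑ v, ∑ u ∈ Finset.univ.filter (fun u => G'.Adj v u), val s(v,u) = 0 := by
  have step : ∑ v, ∑ u ∈ Finset.univ.filter (fun u => G'.Adj v u), val s(v,u)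
      = ∑ p ∈ (Finset.univ ×ˢ Finset.univ).filter (fun p : V × V => G'.Adj p.1 p.2),
          val s(p.1, p.2) := by
    rw [Finset.sum_filter, Finset.sum_product]
    simp_rw [Finset.sum_filter]
  rw [step]
  refine Finset.sum_involution (fun p _ => (p.2, p.1)) ?_ ?_ ?_ ?_
  · intro p _
    rw [show s(p.2, p.1) = s(p.1, p.2) from Sym2.eq_swap]
    exact k_add_self _
  · intro p hp _
    intro hcon
    have h1 : p.2 = p.1 := congrArg Prod.fst hcon
    have := (Finset.mem_filter.1 hp).2
    rw [← h1] at this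
    exact G'.irrefl this
  · intro p hp
    simp only [Finset.mem_filter, Finset.mem_product] at hp ⊢
    exact ⟨⟨Finset.mem_univ _, Finset.mem_univ _⟩, hp.2.symm⟩
  · intro p _
    rfl

variable {V : Type} (G : SimpleGraph V) (e f : Sym2 V)

lemma iext_adj_inl_inl (u v : V) :
    (IExtension G e f).Adj (.inl u) (.inl v) ↔ (G.deleteEdges {e,f}).Adj u v := by
  simp only [IExtension, fromEdgeSet_adj, Set.mem_union, Set.mem_image, Set.mem_setOf_eq,
    Set.mem_singleton_iff, deleteEdges_adj, Set.mem_insert_iff, Set.mem_diff]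
  constructor
  · rintro ⟨h, hne⟩
    rcases h with ((⟨z, ⟨hz, hz2⟩, hmap⟩ | h) | ⟨w, hw, h⟩) | ⟨w, hw, h⟩
    · induction z using Sym2.ind with
      | _ x y =>
        rw [Sym2.map_pair_eq, Sym2.eq_iff] at hmap
        rcases hmap with ⟨h1, h2⟩ | ⟨h1, h2⟩ <;>
          [skip; rw [Sym2.eq_swap] at hz hz2] <;>
          · simp only [Sum.inl.injEq] at h1 h2
            cases h1; cases h2
            exact ⟨hz, by simpa using hz2⟩
    · rw [Sym2.eq_iff] at h; simp at h
    · rw [Sym2.eq_iff] at h; simp at h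
    · rw [Sym2.eq_iff] at h; simp at h
  · rintro ⟨hadj, hni⟩
    refine ⟨Or.inl (Or.inl (Or.inl ⟨s(u,v), ⟨hadj, by simpa using hni⟩, by rw [Sym2.map_pair_eq]⟩)),
      by simp [hadj.ne]⟩

lemma iext_adj_inl_inr0 (u : V) :
    (IExtension G e f).Adj (.inl u) (.inr 0) ↔ u ∈ e := by
  simp only [IExtension, fromEdgeSet_adj, Set.mem_union, Set.mem_image, Set.mem_setOf_eq,
    Set.mem_singleton_iff]
  constructor
  · rintro ⟨h, -⟩
    rcases h with ((⟨z, hz, hmap⟩ | h) | ⟨w, hw, h⟩) | ⟨w, hw, h⟩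
    · induction z using Sym2.ind with
      | _ x y => rw [Sym2.map_pair_eq, Sym2.eq_iff] at hmap; simp at hmap
    · rw [Sym2.eq_iff] at h; simp at h
    · rw [Sym2.eq_iff] at h
      rcases h with ⟨h1, -⟩ | ⟨h1, -⟩
      · cases h1; exact hw
      · simp at h1
    · rw [Sym2.eq_iff] at h; simp at h
  · intro hu
    exact ⟨Or.inl (Or.inr ⟨u, hu, rfl⟩), by simp⟩

lemma iext_adj_inl_inr1 (u : V) :
    (IExtension G e f).Adj (.inl u) (.inr 1) ↔ u ∈ f := by
  simp only [IExtension, fromEdgeSet_adj, Set.mem_union, Set.mem_image, Set.mem_setOf_eq,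
    Set.mem_singleton_iff]
  constructor
  · rintro ⟨h, -⟩
    rcases h with ((⟨z, hz, hmap⟩ | h) | ⟨w, hw, h⟩) | ⟨w, hw, h⟩
    · induction z using Sym2.ind with
      | _ x y => rw [Sym2.map_pair_eq, Sym2.eq_iff] at hmap; simp at hmap
    · rw [Sym2.eq_iff] at h; simp at h
    · rw [Sym2.eq_iff] at h; simp at h
    · rw [Sym2.eq_iff] at h
      rcases h with ⟨h1, -⟩ | ⟨h1, -⟩
      · cases h1; exact hw
      · simp at h1
  · intro hu
    exact ⟨Or.inr ⟨u, hu, rfl⟩, by simp⟩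

lemma iext_adj_inr_inr (i j : Fin 2) :
    (IExtension G e f).Adj (.inr i) (.inr j) ↔ i ≠ j := by
  simp only [IExtension, fromEdgeSet_adj, Set.mem_union, Set.mem_image, Set.mem_setOf_eq,
    Set.mem_singleton_iff]
  constructor
  · rintro ⟨-, hne⟩
    simpa using hne
  · intro hij
    refine ⟨Or.inl (Or.inl (Or.inr ?_)), by simpa using hij⟩
    rw [Sym2.eq_iff]
    simp only [Sum.inr.injEq]
    omega

lemma iext_cubic (he : e ∈ G.edgeSet) (hf : f ∈ G.edgeSet) (hef : e ≠ f) (hG : IsCubic G) :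
    IsCubic (IExtension G e f) := by
  classical
  obtain ⟨a, b, hab⟩ : ∃ a b, e = s(a,b) := Sym2.ind (fun x y => ⟨x, y, rfl⟩) e
  obtain ⟨c, d, hcd⟩ : ∃ c d, f = s(c,d) := Sym2.ind (fun x y => ⟨x, y, rfl⟩) f
  have hadj_e : G.Adj a b := by have h := he; rw [hab] at h; exact G.mem_edgeSet.1 h
  have hadj_f : G.Adj c d := by have h := hf; rw [hcd] at h; exact G.mem_edgeSet.1 h
  rintro (v | i)
  · set F : V → V ⊕ Fin 2 := fun u =>
      if s(v,u) = e then Sum.inr 0 else if s(v,u) = f then Sum.inr (1 : Fin 2) else Sum.inl u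
      with hF
    have hFe : ∀ u, s(v,u) = e → F u = Sum.inr 0 := by
      intro u h; simp only [hF]; rw [if_pos h]
    have hFf : ∀ u, s(v,u) = f → F u = Sum.inr 1 := by
      intro u h
      have hne : s(v,u) ≠ e := fun hc => hef (hc.symm.trans h).symm.symm
      simp only [hF]; rw [if_neg hne, if_pos h]
    have hFn : ∀ u, s(v,u) ≠ e → s(v,u) ≠ f → F u = Sum.inl u := by
      intro u h1 h2; simp only [hF]; rw [if_neg h1, if_neg h2]
    have himg : (IExtension G e f).neighborSet (Sum.inl v) = F '' (G.neighborSet v) := by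
      ext x
      simp only [mem_neighborSet, Set.mem_image]
      constructor
      · intro hx
        match x with
        | .inl u =>
          rw [iext_adj_inl_inl, deleteEdges_adj] at hx
          obtain ⟨h1, h2⟩ := hx
          simp only [Set.mem_insert_iff, Set.mem_singleton_iff] at h2
          push_neg at h2
          exact ⟨u, h1, hFn u h2.1 h2.2⟩
        | .inr j =>
          rcases fin2_cases j with rfl | rfl
          · rw [iext_adj_inl_inr0] at hx
            obtain ⟨u, hu⟩ := Sym2.mem_iff_exists.1 hx
            have : G.Adj v u := by
              have h := he; rw [hu] at h; exact G.mem_edgeSet.1 h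
            exact ⟨u, this, hFe u hu.symm⟩
          · rw [iext_adj_inl_inr1] at hx
            obtain ⟨u, hu⟩ := Sym2.mem_iff_exists.1 hx
            have : G.Adj v u := by
              have h := hf; rw [hu] at h; exact G.mem_edgeSet.1 h
            exact ⟨u, this, hFf u hu.symm⟩
      · rintro ⟨u, hu, rfl⟩
        by_cases h1 : s(v,u) = e
        · rw [hFe u h1, iext_adj_inl_inr0]
          rw [← h1]; exact Sym2.mem_mk_left v u
        · by_cases h2 : s(v,u) = f
          · rw [hFf u h2, iext_adj_inl_inr1]
            rw [← h2]; exact Sym2.mem_mk_left v u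
          · rw [hFn u h1 h2, iext_adj_inl_inl, deleteEdges_adj]
            exact ⟨hu, by simp [h1, h2]⟩
    have hinj : Set.InjOn F (G.neighborSet v) := by
      intro u hu u' hu' huu'
      by_cases p1 : s(v,u) = e
      · rw [hFe u p1] at huu'
        by_cases q1 : s(v,u') = e
        · exact Sym2.congr_right.1 (p1.trans q1.symm)
        · by_cases q2 : s(v,u') = f
          · rw [hFf u' q2] at huu'; simp at huu'
          · rw [hFn u' q1 q2] at huu'; simp at huu'
      · by_cases p2 : s(v,u) = f
        · rw [hFf u p2] at huu'
          by_cases q1 : s(v,u') = e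
          · rw [hFe u' q1] at huu'; simp at huu'
          · by_cases q2 : s(v,u') = f
            · exact Sym2.congr_right.1 (p2.trans q2.symm)
            · rw [hFn u' q1 q2] at huu'; simp at huu'
        · rw [hFn u p1 p2] at huu'
          by_cases q1 : s(v,u') = e
          · rw [hFe u' q1] at huu'; simp at huu'
          · by_cases q2 : s(v,u') = f
            · rw [hFf u' q2] at huu'; simp at huu'
            · rw [hFn u' q1 q2] at huu'; exact Sum.inl.inj huu'
    rw [Nat.card_coe_set_eq, himg, Set.ncard_image_of_injOn hinj,
      ← Nat.card_coe_set_eq, hG v]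
  · rcases fin2_cases i with rfl | rfl
    · have hset : (IExtension G e f).neighborSet (Sum.inr 0) =
          {Sum.inl a, Sum.inl b, Sum.inr 1} := by
        ext x
        simp only [mem_neighborSet, Set.mem_insert_iff, Set.mem_singleton_iff]
        match x with
        | .inl u =>
          rw [SimpleGraph.adj_comm, iext_adj_inl_inr0, hab, Sym2.mem_iff]
          simp
        | .inr j =>
          rw [iext_adj_inr_inr]
          rcases fin2_cases j with rfl | rfl <;> simp
      rw [Nat.card_coe_set_eq, hset,
        Set.ncard_insert_of_notMem (by simp [hadj_e.ne]), Set.ncard_pair (by simp)]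
    · have hset : (IExtension G e f).neighborSet (Sum.inr 1) =
          {Sum.inl c, Sum.inl d, Sum.inr 0} := by
        ext x
        simp only [mem_neighborSet, Set.mem_insert_iff, Set.mem_singleton_iff]
        match x with
        | .inl u =>
          rw [SimpleGraph.adj_comm, iext_adj_inl_inr1, hcd, Sym2.mem_iff]
          simp
        | .inr j =>
          rw [iext_adj_inr_inr]
          rcases fin2_cases j with rfl | rfl <;> simp
      rw [Nat.card_coe_set_eq, hset,
        Set.ncard_insert_of_notMem (by simp [hadj_f.ne]), Set.ncard_pair (by simp)]

lemma iext_connected (he : e ∈ G.edgeSet) (hf : f ∈ G.edgeSet) (hG : G.Connected) :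
    (IExtension G e f).Connected := by
  classical
  set H := IExtension G e f with hH
  obtain ⟨a, b, hab⟩ : ∃ a b, e = s(a,b) := Sym2.ind (fun x y => ⟨x, y, rfl⟩) e
  have key : ∀ x y : V, G.Adj x y → H.Reachable (.inl x) (.inl y) := by
    intro x y hxy
    by_cases h1 : s(x,y) = e
    · have hx : x ∈ e := by rw [← h1]; exact Sym2.mem_mk_left x y
      have hy : y ∈ e := by rw [← h1]; exact Sym2.mem_mk_right x y
      exact ((H.adj_symm ((iext_adj_inl_inr0 G e f x).2 hx)).reachable.symm).trans
        ((H.adj_symm ((iext_adj_inl_inr0 G e f y).2 hy)).reachable)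
    · by_cases h2 : s(x,y) = f
      · have hx : x ∈ f := by rw [← h2]; exact Sym2.mem_mk_left x y
        have hy : y ∈ f := by rw [← h2]; exact Sym2.mem_mk_right x y
        exact ((H.adj_symm ((iext_adj_inl_inr1 G e f x).2 hx)).reachable.symm).trans
          ((H.adj_symm ((iext_adj_inl_inr1 G e f y).2 hy)).reachable)
      · exact ((iext_adj_inl_inl G e f x y).2 (by rw [deleteEdges_adj]; exact ⟨hxy, by simp [h1, h2]⟩)).reachable
  have lift : ∀ x y : V, H.Reachable (.inl x) (.inl y) := by
    intro x y
    obtain ⟨w⟩ := hG.preconnected x y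
    induction w with
    | nil => exact Reachable.refl _
    | cons h p ih => exact (key _ _ h).trans ih
  have base : ∀ v : V, H.Reachable (.inl v) (.inr 0) := by
    intro v
    have ha : a ∈ e := by rw [hab]; exact Sym2.mem_mk_left a b
    exact (lift v a).trans ((iext_adj_inl_inr0 G e f a).2 ha).reachable
  have h01 : H.Reachable (.inr 0) (.inr 1) := ((iext_adj_inr_inr G e f 0 1).2 (by decide)).reachable
  have tozero : ∀ x : V ⊕ Fin 2, H.Reachable x (.inr 0) := by
    rintro (v | i)
    · exact base v
    · rcases fin2_cases i with rfl | rfl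
      · exact Reachable.refl _
      · exact h01.symm
  have : Nonempty (V ⊕ Fin 2) := ⟨.inr 0⟩
  exact SimpleGraph.Connected.mk (fun x y => (tozero x).trans (tozero y).symm)

lemma colourable_del_of_iext {V : Type} (G : SimpleGraph V) (e f : Sym2 V)
    (h : Colourable3 (IExtension G e f)) : Colourable3 (G.deleteEdges {e,f}) := by
  classical
  set H := IExtension G e f with hH
  obtain ⟨c, hc⟩ := h
  set val : Sym2 V → K2 := fun x =>
    if h : Sym2.map Sum.inl x ∈ H.edgeSet then phi (c ⟨_, h⟩) else 0 with hval
  have hmem : ∀ {u v : V}, (G.deleteEdges {e,f}).Adj u v →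
      s(Sum.inl u, Sum.inl v) ∈ H.edgeSet := by
    intro u v h
    exact H.mem_edgeSet.2 ((iext_adj_inl_inl G e f u v).2 h)
  refine colourable_of_val _ val ?_ ?_
  · intro p q h
    simp only [hval, Sym2.map_pair_eq]
    rw [dif_pos (hmem h)]
    exact phi_ne_zero _
  · intro p q r h1 h2 hne heq
    simp only [hval, Sym2.map_pair_eq] at heq
    rw [dif_pos (hmem h1), dif_pos (hmem h2)] at heq
    have hEne : s(Sum.inl p, (Sum.inl q : V ⊕ Fin 2)) ≠ s(Sum.inl p, Sum.inl r) := by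
      intro hcon
      exact hne (Sum.inl_injective (Sym2.congr_right.1 hcon))
    exact hc _ _ ⟨hEne, Sum.inl p, Sym2.mem_mk_left _ _, Sym2.mem_mk_left _ _⟩
      (phi_inj _ _ heq)

lemma iext_colourable {V : Type} [Fintype V] (G : SimpleGraph V) (e f : Sym2 V)
    (he : e ∈ G.edgeSet) (hf : f ∈ G.edgeSet) (hef : e ≠ f) (hcub : IsCubic G)
    (hncol : ¬ Colourable3 G) (hcol : Colourable3 (G.deleteEdges {e,f})) :
    Colourable3 (IExtension G e f) := by
  classical
  set G' := G.deleteEdges {e,f} with hG'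
  obtain ⟨c, hc⟩ := hcol
  set val : Sym2 V → K2 := fun x => if h : x ∈ G'.edgeSet then phi (c ⟨x, h⟩) else 0 with hval
  have val_ne : ∀ {v u}, G'.Adj v u → val s(v,u) ≠ 0 := by
    intro v u h
    simp only [hval]
    rw [dif_pos (G'.mem_edgeSet.2 h)]
    exact phi_ne_zero _
  have val_proper : ∀ {v u u'}, G'.Adj v u → G'.Adj v u' → u ≠ u' →
      val s(v,u) ≠ val s(v,u') := by
    intro v u u' h1 h2 hne heq
    simp only [hval] at heq
    rw [dif_pos (G'.mem_edgeSet.2 h1), dif_pos (G'.mem_edgeSet.2 h2)] at heq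
    have hEne : s(v,u) ≠ s(v,u') := fun hcon => hne (Sym2.congr_right.1 hcon)
    exact hc _ _ ⟨hEne, v, Sym2.mem_mk_left _ _, Sym2.mem_mk_left _ _⟩ (phi_inj _ _ heq)
  set m : V → K2 := fun v => ∑ u ∈ Finset.univ.filter (fun u => G'.Adj v u), val s(v,u)
    with hm
  have hsum : ∑ v, m v = 0 := handshake G' val
  have hdeg3 : ∀ v, (Finset.univ.filter (fun u => G.Adj v u)).card = 3 := by
    intro v
    have h3 := hcub v
    rw [Nat.card_coe_set_eq, Set.ncard_eq_toFinset_card'] at h3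
    rw [← h3]
    congr 1
    ext u
    simp [Set.mem_toFinset]
  have hfull : ∀ v, v ∉ e → v ∉ f → m v = 0 := by
    intro v hve hvf
    have hfil : Finset.univ.filter (fun u => G'.Adj v u)
        = Finset.univ.filter (fun u => G.Adj v u) := by
      ext u
      simp only [Finset.mem_filter, Finset.mem_univ, true_and, hG', deleteEdges_adj]
      refine ⟨fun h => h.1, fun h => ⟨h, ?_⟩⟩
      simp only [Set.mem_insert_iff, Set.mem_singleton_iff]
      push_neg
      constructor
      · intro hcon; rw [← hcon] at hve; exact hve (Sym2.mem_mk_left v u)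
      · intro hcon; rw [← hcon] at hvf; exact hvf (Sym2.mem_mk_left v u)
    obtain ⟨x, y, z, hxy, hxz, hyz, hset⟩ := Finset.card_eq_three.1
      (show (Finset.univ.filter (fun u => G'.Adj v u)).card = 3 by rw [hfil]; exact hdeg3 v)
    have hmem : ∀ u, u ∈ ({x, y, z} : Finset V) → G'.Adj v u := by
      intro u hu
      have : u ∈ Finset.univ.filter (fun u => G'.Adj v u) := by rw [hset]; exact hu
      simpa using this
    have hax := hmem x (by simp)
    have hay := hmem y (by simp)
    have haz := hmem z (by simp)
    have : m v = val s(v,x) + (val s(v,y) + val s(v,z)) := by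
      simp only [hm]
      rw [hset, Finset.sum_insert (by simp [hxy, hxz]), Finset.sum_insert (by simp [hyz]),
        Finset.sum_singleton]
    rw [this]
    exact k_sum3 _ _ _ (val_ne hax) (val_ne hay) (val_ne haz)
      (val_proper hax hay hxy) (val_proper hax haz hxz) (val_proper hay haz hyz)
  have hdeg2 : ∀ v b, G.Adj v b → (∀ u, G'.Adj v u ↔ G.Adj v u ∧ u ≠ b) →
      (m v ≠ 0 ∧ ∀ u, G'.Adj v u → val s(v,u) ≠ m v) := by
    intro v b hvb hchar
    have hfil : Finset.univ.filter (fun u => G'.Adj v u)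
        = (Finset.univ.filter (fun u => G.Adj v u)).erase b := by
      ext u
      simp only [Finset.mem_filter, Finset.mem_univ, true_and, Finset.mem_erase, hchar u]
      tauto
    obtain ⟨x, y, hxy, hset⟩ := Finset.card_eq_two.1
      (show (Finset.univ.filter (fun u => G'.Adj v u)).card = 2 by
        rw [hfil, Finset.card_erase_of_mem (by simp [hvb]), hdeg3 v])
    have hmem : ∀ u, u ∈ ({x, y} : Finset V) → G'.Adj v u := by
      intro u hu
      have : u ∈ Finset.univ.filter (fun u => G'.Adj v u) := by rw [hset]; exact hu
      simpa using this
    have hax := hmem x (by simp)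
    have hay := hmem y (by simp)
    have hmv : m v = val s(v,x) + val s(v,y) := by
      simp only [hm]
      rw [hset, Finset.sum_pair hxy]
    have hd := k_two _ _ (val_ne hax) (val_ne hay) (val_proper hax hay hxy)
    refine ⟨by rw [hmv]; exact hd.1, ?_⟩
    intro u hu
    have : u ∈ ({x,y} : Finset V) := by
      rw [← hset]; simpa using hu
    rcases Finset.mem_insert.1 this with rfl | h
    · rw [hmv]; exact fun hcon => hd.2.1 hcon.symm
    · rw [Finset.mem_singleton.1 h, hmv]
      exact fun hcon => hd.2.2 hcon.symm
  have hdeg1 : ∀ v a' d', a' ≠ d' → G.Adj v a' → G.Adj v d' →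
      (∀ u, G'.Adj v u ↔ G.Adj v u ∧ u ≠ a' ∧ u ≠ d') →
      (m v ≠ 0 ∧ ∀ u, G'.Adj v u → val s(v,u) = m v) := by
    intro v a' d' had hva hvd hchar
    have hfil : Finset.univ.filter (fun u => G'.Adj v u)
        = ((Finset.univ.filter (fun u => G.Adj v u)).erase a').erase d' := by
      ext u
      simp only [Finset.mem_filter, Finset.mem_univ, true_and, Finset.mem_erase, hchar u]
      tauto
    obtain ⟨x, hset⟩ := Finset.card_eq_one.1
      (show (Finset.univ.filter (fun u => G'.Adj v u)).card = 1 by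
        rw [hfil, Finset.card_erase_of_mem (by simp [hvd, had.symm]),
          Finset.card_erase_of_mem (by simp [hva]), hdeg3 v])
    have hax : G'.Adj v x := by
      have : x ∈ Finset.univ.filter (fun u => G'.Adj v u) := by rw [hset]; simp
      simpa using this
    have hmv : m v = val s(v,x) := by
      simp only [hm]
      rw [hset, Finset.sum_singleton]
    refine ⟨by rw [hmv]; exact val_ne hax, ?_⟩
    intro u hu
    have : u ∈ ({x} : Finset V) := by rw [← hset]; simpa using hu
    rw [Finset.mem_singleton.1 this, hmv]
  by_cases hshare : ∃ w, w ∈ e ∧ w ∈ f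
  · -- e and f share a vertex w
    obtain ⟨w, hwe, hwf⟩ := hshare
    obtain ⟨a, hea⟩ := Sym2.mem_iff_exists.1 hwe
    obtain ⟨d, hfd⟩ := Sym2.mem_iff_exists.1 hwf
    have hGwa : G.Adj w a := by have h := he; rw [hea] at h; exact G.mem_edgeSet.1 h
    have hGwd : G.Adj w d := by have h := hf; rw [hfd] at h; exact G.mem_edgeSet.1 h
    have hwa : w ≠ a := hGwa.ne
    have hwd : w ≠ d := hGwd.ne
    have had : a ≠ d := fun hcon => hef (by rw [hea, hfd, hcon])
    have hea' : e = s(a, w) := by rw [hea, Sym2.eq_swap]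
    have hfd' : f = s(d, w) := by rw [hfd, Sym2.eq_swap]
    have haf : a ∉ f := by
      rw [hfd, Sym2.mem_iff]
      push_neg
      exact ⟨fun h => hwa h.symm, had⟩
    have hde : d ∉ e := by
      rw [hea, Sym2.mem_iff]
      push_neg
      exact ⟨fun h => hwd h.symm, fun h => had h.symm⟩
    have char_a : ∀ u, G'.Adj a u ↔ G.Adj a u ∧ u ≠ w := by
      intro u
      rw [hG', deleteEdges_adj]
      simp only [Set.mem_insert_iff, Set.mem_singleton_iff]
      constructor
      · rintro ⟨h1, h2⟩
        push_neg at h2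
        refine ⟨h1, fun hcon => h2.1 ?_⟩
        rw [hcon, hea']
      · rintro ⟨h1, h2⟩
        refine ⟨h1, ?_⟩
        push_neg
        constructor
        · rw [hea']; exact fun hcon => h2 (Sym2.congr_right.1 hcon)
        · exact fun hcon => haf (hcon ▸ Sym2.mem_mk_left a u)
    have char_d : ∀ u, G'.Adj d u ↔ G.Adj d u ∧ u ≠ w := by
      intro u
      rw [hG', deleteEdges_adj]
      simp only [Set.mem_insert_iff, Set.mem_singleton_iff]
      constructor
      · rintro ⟨h1, h2⟩
        push_neg at h2
        refine ⟨h1, fun hcon => h2.2 ?_⟩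
        rw [hcon, hfd']
      · rintro ⟨h1, h2⟩
        refine ⟨h1, ?_⟩
        push_neg
        constructor
        · exact fun hcon => hde (hcon ▸ Sym2.mem_mk_left d u)
        · rw [hfd']; exact fun hcon => h2 (Sym2.congr_right.1 hcon)
    have char_w : ∀ u, G'.Adj w u ↔ G.Adj w u ∧ u ≠ a ∧ u ≠ d := by
      intro u
      rw [hG', deleteEdges_adj]
      simp only [Set.mem_insert_iff, Set.mem_singleton_iff]
      constructor
      · rintro ⟨h1, h2⟩
        push_neg at h2
        refine ⟨h1, fun hcon => h2.1 ?_, fun hcon => h2.2 ?_⟩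
        · rw [hcon, hea]
        · rw [hcon, hfd]
      · rintro ⟨h1, h2, h3⟩
        refine ⟨h1, ?_⟩
        push_neg
        constructor
        · rw [hea]; exact fun hcon => h2 (Sym2.congr_right.1 hcon)
        · rw [hfd]; exact fun hcon => h3 (Sym2.congr_right.1 hcon)
    obtain ⟨hma0, hvala⟩ := hdeg2 a w hGwa.symm char_a
    obtain ⟨hmd0, hvald⟩ := hdeg2 d w hGwd.symm char_d
    obtain ⟨hmw0, hvalw⟩ := hdeg1 w a d had hGwa hGwd char_w
    have hsum3 : m a + (m w + m d) = 0 := by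
      have h1 : ∑ v ∈ ({a, w, d} : Finset V), m v = ∑ v, m v := by
        refine Finset.sum_subset (Finset.subset_univ _) ?_
        intro x _ hx
        simp only [Finset.mem_insert, Finset.mem_singleton] at hx
        push_neg at hx
        refine hfull x ?_ ?_
        · rw [hea, Sym2.mem_iff]; push_neg; exact ⟨hx.2.1, hx.1⟩
        · rw [hfd, Sym2.mem_iff]; push_neg; exact ⟨hx.2.1, hx.2.2⟩
      rw [Finset.sum_insert (by simp [hwa.symm, had]),
        Finset.sum_insert (by simp [hwd]), Finset.sum_singleton] at h1
      exact h1.trans hsum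
    have hma_eq : m a = m w + m d := k_eq_of_add_eq_zero _ _ hsum3
    obtain ⟨x₀, hx0, hxw, hxa⟩ := k_exists (m w) (m a)
    obtain ⟨kf1, kf2, kf3, kf4, kf5, kf6, kf7, kf8, kf9, kf10⟩ :=
      k_adj (m a) (m w) (m d) x₀ hma0 hmw0 hmd0 hx0 hxw hxa hma_eq
    set hh : V → Fin 2 → K2 := fun u i =>
      if i = 0 then (if u = a then m a else x₀) else (if u = d then m d else x₀ + m w)
      with hhh
    set T := m a + x₀ with hT
    set valH := Sym2.lift ⟨gfun val hh T, gfun_symm val hh T⟩ with hvalH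
    have hl : ∀ p q : V ⊕ Fin 2, valH s(p,q) = gfun val hh T p q := by
      intro p q
      rw [hvalH, Sym2.lift_mk]
    have Ell : ∀ u v', valH s(.inl u, .inl v') = val s(u, v') := by
      intro u v'; rw [hl]; rfl
    have E0a : valH s(.inl a, .inr 0) = m a := by
      rw [hl]
      show hh a 0 = m a
      simp [hhh]
    have E0o : ∀ u, u ≠ a → valH s(.inl u, .inr 0) = x₀ := by
      intro u hu
      rw [hl]
      show hh u 0 = x₀
      simp [hhh, hu]
    have E1d : valH s(.inl d, .inr 1) = m d := by
      rw [hl]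
      show hh d 1 = m d
      simp [hhh]
    have E1o : ∀ u, u ≠ d → valH s(.inl u, .inr 1) = x₀ + m w := by
      intro u hu
      rw [hl]
      show hh u 1 = x₀ + m w
      simp [hhh, hu]
    have Err : ∀ i j : Fin 2, i ≠ j → valH s(.inr i, .inr j) = T := by
      intro i j hij
      rw [hl]
      show (if i = j then 0 else T) = T
      rw [if_neg hij]
    -- membership facts
    have mem_e : ∀ u : V, u ∈ e → u = w ∨ u = a := by
      intro u hu; rwa [hea, Sym2.mem_iff] at hu
    have mem_f : ∀ u : V, u ∈ f → u = w ∨ u = d := by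
      intro u hu; rwa [hfd, Sym2.mem_iff] at hu
    have h0lr : ∀ u (j : Fin 2), (IExtension G e f).Adj (.inl u) (.inr j) →
        valH s(.inl u, .inr j) ≠ 0 := by
      intro u j hadj
      rcases fin2_cases j with rfl | rfl
      · rcases mem_e u ((iext_adj_inl_inr0 G e f u).1 hadj) with rfl | rfl
        · rw [E0o u hwa]; exact hx0
        · rw [E0a]; exact hma0
      · rcases mem_f u ((iext_adj_inl_inr1 G e f u).1 hadj) with rfl | rfl
        · rw [E1o u hwd]; exact kf1
        · rw [E1d]; exact hmd0
    refine colourable_of_val _ valH ?_ ?_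
    · rintro (u | i) (v' | j) hadj
      · rw [Ell]
        exact val_ne ((iext_adj_inl_inl G e f u v').1 hadj)
      · exact h0lr u j hadj
      · rw [Sym2.eq_swap]
        exact h0lr v' i hadj.symm
      · rw [Err i j ((iext_adj_inr_inr G e f i j).1 hadj)]
        exact kf2
    · have hA : ∀ v' u (j : Fin 2), (IExtension G e f).Adj (.inl v') (.inl u) →
          (IExtension G e f).Adj (.inl v') (.inr j) →
          valH s(.inl v', .inl u) ≠ valH s(.inl v', .inr j) := by
        intro v' u j h1 h2
        have hadj' : G'.Adj v' u := (iext_adj_inl_inl G e f v' u).1 h1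
        rw [Ell]
        rcases fin2_cases j with rfl | rfl
        · rcases mem_e v' ((iext_adj_inl_inr0 G e f v').1 h2) with rfl | rfl
          · rw [E0o v' hwa, hvalw u hadj']
            exact fun hcon => hxw hcon.symm
          · rw [E0a]
            exact hvala u hadj'
        · rcases mem_f v' ((iext_adj_inl_inr1 G e f v').1 h2) with rfl | rfl
          · rw [E1o v' hwd, hvalw u hadj']
            exact fun hcon => kf9 hcon.symm
          · rw [E1d]
            exact hvald u hadj'
      have hB : ∀ v', (IExtension G e f).Adj (.inl v') (.inr 0) →
          (IExtension G e f).Adj (.inl v') (.inr 1) →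
          valH s(.inl v', .inr 0) ≠ valH s(.inl v', .inr 1) := by
        intro v' h1 h2
        have hv'w : v' = w := by
          rcases mem_e v' ((iext_adj_inl_inr0 G e f v').1 h1) with rfl | rfl
          · rfl
          · exact absurd ((iext_adj_inl_inr1 G e f v').1 h2) haf
        subst hv'w
        rw [E0o v' hwa, E1o v' hwd]
        exact kf3
      have hC : ∀ (j : Fin 2) u u', u ≠ u' → (IExtension G e f).Adj (.inr j) (.inl u) →
          (IExtension G e f).Adj (.inr j) (.inl u') →
          valH s(.inr j, .inl u) ≠ valH s(.inr j, .inl u') := by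
        intro j u u' huu' h1 h2
        rw [Sym2.eq_swap (a := Sum.inr j), Sym2.eq_swap (a := Sum.inr j)]
        rcases fin2_cases j with rfl | rfl
        · rcases mem_e u ((iext_adj_inl_inr0 G e f u).1 h1.symm) with rfl | rfl <;>
            rcases mem_e u' ((iext_adj_inl_inr0 G e f u').1 h2.symm) with rfl | rfl
          · exact absurd rfl huu'
          · rw [E0o u hwa, E0a]; exact fun hcon => hxa hcon
          · rw [E0a, E0o u' hwa]; exact fun hcon => hxa hcon.symm
          · exact absurd rfl huu'
        · rcases mem_f u ((iext_adj_inl_inr1 G e f u).1 h1.symm) with rfl | rfl <;>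
            rcases mem_f u' ((iext_adj_inl_inr1 G e f u').1 h2.symm) with rfl | rfl
          · exact absurd rfl huu'
          · rw [E1o u hwd, E1d]; exact kf8
          · rw [E1d, E1o u' hwd]; exact fun hcon => kf8 hcon.symm
          · exact absurd rfl huu'
      have hD : ∀ (i j : Fin 2) u, i ≠ j → (IExtension G e f).Adj (.inr i) (.inl u) →
          valH s(.inr i, .inl u) ≠ valH s(.inr i, .inr j) := by
        intro i j u hij h1
        rw [Sym2.eq_swap (a := Sum.inr i) (b := Sum.inl u), Err i j hij]
        rcases fin2_cases i with rfl | rfl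
        · rcases mem_e u ((iext_adj_inl_inr0 G e f u).1 h1.symm) with rfl | rfl
          · rw [E0o u hwa]; exact fun hcon => kf5 hcon.symm
          · rw [E0a]; exact fun hcon => kf4 hcon.symm
        · rcases mem_f u ((iext_adj_inl_inr1 G e f u).1 h1.symm) with rfl | rfl
          · rw [E1o u hwd]; exact fun hcon => kf6 hcon.symm
          · rw [E1d]; exact fun hcon => kf7 hcon.symm
      rintro (v' | i) (u | j) (u' | j') h1 h2 hqr
      · rw [Ell, Ell]
        exact val_proper ((iext_adj_inl_inl G e f v' u).1 h1)
          ((iext_adj_inl_inl G e f v' u').1 h2) (fun hcon => hqr (by rw [hcon]))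
      · exact hA v' u j' h1 h2
      · exact (hA v' u' j h2 h1).symm
      · have hjj : j ≠ j' := fun hcon => hqr (by rw [hcon])
        rcases fin2_cases j with rfl | rfl <;> rcases fin2_cases j' with rfl | rfl
        · exact absurd rfl hjj
        · exact hB v' h1 h2
        · exact (hB v' h2 h1).symm
        · exact absurd rfl hjj
      · exact hC i u u' (fun hcon => hqr (by rw [hcon])) h1 h2
      · exact hD i j' u ((iext_adj_inr_inr G e f i j').1 h2) h1
      · exact (hD i j u' ((iext_adj_inr_inr G e f i j).1 h1) h2).symm
      · have hij : i ≠ j := (iext_adj_inr_inr G e f i j).1 h1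
        have hij' : i ≠ j' := (iext_adj_inr_inr G e f i j').1 h2
        exact absurd (by
          rcases fin2_cases i with rfl | rfl <;> rcases fin2_cases j with rfl | rfl <;>
            rcases fin2_cases j' with rfl | rfl <;> first | rfl | (exact absurd rfl hij) |
            (exact absurd rfl hij') : j = j') (fun hcon => hqr (by rw [hcon]))
  · -- e and f are disjoint
    push_neg at hshare
    obtain ⟨a, b, hab⟩ : ∃ a b, e = s(a,b) := Sym2.ind (fun x y => ⟨x, y, rfl⟩) e
    obtain ⟨c', d, hcd⟩ : ∃ c' d, f = s(c',d) := Sym2.ind (fun x y => ⟨x, y, rfl⟩) f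
    have hGab : G.Adj a b := by have h := he; rw [hab] at h; exact G.mem_edgeSet.1 h
    have hGcd : G.Adj c' d := by have h := hf; rw [hcd] at h; exact G.mem_edgeSet.1 h
    have hne_ab : a ≠ b := hGab.ne
    have hne_cd : c' ≠ d := hGcd.ne
    have hae : a ∈ e := by rw [hab]; exact Sym2.mem_mk_left _ _
    have hbe : b ∈ e := by rw [hab]; exact Sym2.mem_mk_right _ _
    have hcf : c' ∈ f := by rw [hcd]; exact Sym2.mem_mk_left _ _
    have hdf : d ∈ f := by rw [hcd]; exact Sym2.mem_mk_right _ _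
    have haf : a ∉ f := hshare a hae
    have hbf : b ∉ f := hshare b hbe
    have hce : c' ∉ e := fun h => hshare c' h hcf
    have hde : d ∉ e := fun h => hshare d h hdf
    have hac : a ≠ c' := fun h => hce (h ▸ hae)
    have had : a ≠ d := fun h => hde (h ▸ hae)
    have hbc : b ≠ c' := fun h => hce (h ▸ hbe)
    have hbd : b ≠ d := fun h => hde (h ▸ hbe)
    have hab' : e = s(b, a) := by rw [hab, Sym2.eq_swap]
    have hcd' : f = s(d, c') := by rw [hcd, Sym2.eq_swap]
    have mkchar : ∀ (p q : V) (hq : e = s(p, q)) (hpf : p ∉ f),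
        ∀ u, G'.Adj p u ↔ G.Adj p u ∧ u ≠ q := by
      intro p q hq hpf u
      rw [hG', deleteEdges_adj]
      simp only [Set.mem_insert_iff, Set.mem_singleton_iff]
      constructor
      · rintro ⟨h1, h2⟩
        push_neg at h2
        refine ⟨h1, fun hcon => h2.1 ?_⟩
        rw [hcon, hq]
      · rintro ⟨h1, h2⟩
        refine ⟨h1, ?_⟩
        push_neg
        constructor
        · rw [hq]; exact fun hcon => h2 (Sym2.congr_right.1 hcon)
        · exact fun hcon => hpf (hcon ▸ Sym2.mem_mk_left p u)
      
    have mkcharf : ∀ (p q : V) (hq : f = s(p, q)) (hpe : p ∉ e),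
        ∀ u, G'.Adj p u ↔ G.Adj p u ∧ u ≠ q := by
      intro p q hq hpe u
      rw [hG', deleteEdges_adj]
      simp only [Set.mem_insert_iff, Set.mem_singleton_iff]
      constructor
      · rintro ⟨h1, h2⟩
        push_neg at h2
        refine ⟨h1, fun hcon => h2.2 ?_⟩
        rw [hcon, hq]
      · rintro ⟨h1, h2⟩
        refine ⟨h1, ?_⟩
        push_neg
        constructor
        · exact fun hcon => hpe (hcon ▸ Sym2.mem_mk_left p u)
        · rw [hq]; exact fun hcon => h2 (Sym2.congr_right.1 hcon)
    obtain ⟨hma0, hvala⟩ := hdeg2 a b hGab (mkchar a b hab haf)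
    obtain ⟨hmb0, hvalb⟩ := hdeg2 b a hGab.symm (mkchar b a hab' hbf)
    obtain ⟨hmc0, hvalc⟩ := hdeg2 c' d hGcd (mkcharf c' d hcd hce)
    obtain ⟨hmd0, hvald⟩ := hdeg2 d c' hGcd.symm (mkcharf d c' hcd' hde)
    have hsum4 : m a + (m b + (m c' + m d)) = 0 := by
      have h1 : ∑ v ∈ ({a, b, c', d} : Finset V), m v = ∑ v, m v := by
        refine Finset.sum_subset (Finset.subset_univ _) ?_
        intro x _ hx
        simp only [Finset.mem_insert, Finset.mem_singleton] at hx
        push_neg at hx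
        refine hfull x ?_ ?_
        · rw [hab, Sym2.mem_iff]; push_neg; exact ⟨hx.1, hx.2.1⟩
        · rw [hcd, Sym2.mem_iff]; push_neg; exact ⟨hx.2.2.1, hx.2.2.2⟩
      rw [Finset.sum_insert (by simp [hne_ab, hac, had]),
        Finset.sum_insert (by simp [hbc, hbd]),
        Finset.sum_insert (by simp [hne_cd]), Finset.sum_singleton] at h1
      exact h1.trans hsum
    have hz_eq : m a + m b = m c' + m d := k_regroup _ _ _ _ hsum4
    have hnab : m a ≠ m b := by
      intro hmab
      have hmcd : m c' = m d := k_cd _ _ _ _ hsum4 hmab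
      apply hncol
      set valG : Sym2 V → K2 := fun x => if x = e then m a else if x = f then m c' else val x
        with hvalG
      have hVe : valG e = m a := by simp [hvalG]
      have hVf : valG f = m c' := by simp [hvalG, Ne.symm hef]
      have hVo : ∀ x, x ≠ e → x ≠ f → valG x = val x := by
        intro x h1 h2
        simp only [hvalG]
        rw [if_neg h1, if_neg h2]
      have hG'adj : ∀ p q, G.Adj p q → s(p,q) ≠ e → s(p,q) ≠ f → G'.Adj p q := by
        intro p q h h1 h2
        rw [hG', deleteEdges_adj]
        exact ⟨h, by simp [h1, h2]⟩
      have hvble : ∀ p r, p ∈ e → G'.Adj p r → val s(p,r) ≠ m a := by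
        intro p r hp hadj
        rcases (by rw [hab, Sym2.mem_iff] at hp; exact hp : p = a ∨ p = b) with rfl | rfl
        · exact hvala r hadj
        · exact fun hcon => hvalb r hadj (hcon.trans hmab)
      have hvblf : ∀ p r, p ∈ f → G'.Adj p r → val s(p,r) ≠ m c' := by
        intro p r hp hadj
        rcases (by rw [hcd, Sym2.mem_iff] at hp; exact hp : p = c' ∨ p = d) with rfl | rfl
        · exact hvalc r hadj
        · exact fun hcon => hvald r hadj (hcon.trans hmcd)
      refine colourable_of_val G valG ?_ ?_
      · intro p q h
        by_cases h1 : s(p,q) = e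
        · rw [h1, hVe]; exact hma0
        by_cases h2 : s(p,q) = f
        · rw [h2, hVf]; exact hmc0
        rw [hVo _ h1 h2]
        exact val_ne (hG'adj p q h h1 h2)
      · intro p q r h1 h2 hqr
        by_cases hq1 : s(p,q) = e
        · rw [hq1, hVe]
          have hpe : p ∈ e := hq1 ▸ Sym2.mem_mk_left p q
          by_cases hr1 : s(p,r) = e
          · exact absurd (Sym2.congr_right.1 (hq1.trans hr1.symm)) hqr
          by_cases hr2 : s(p,r) = f
          · exact absurd (hr2 ▸ Sym2.mem_mk_left p r) (hshare p hpe)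
          rw [hVo _ hr1 hr2]
          exact (hvble p r hpe (hG'adj p r h2 hr1 hr2)).symm
        by_cases hq2 : s(p,q) = f
        · rw [hq2, hVf]
          have hpf : p ∈ f := hq2 ▸ Sym2.mem_mk_left p q
          by_cases hr1 : s(p,r) = e
          · exact absurd hpf (hshare p (hr1 ▸ Sym2.mem_mk_left p r))
          by_cases hr2 : s(p,r) = f
          · exact absurd (Sym2.congr_right.1 (hq2.trans hr2.symm)) hqr
          rw [hVo _ hr1 hr2]
          exact (hvblf p r hpf (hG'adj p r h2 hr1 hr2)).symm
        rw [hVo _ hq1 hq2]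
        by_cases hr1 : s(p,r) = e
        · rw [hr1, hVe]
          exact hvble p q (hr1 ▸ Sym2.mem_mk_left p r) (hG'adj p q h1 hq1 hq2)
        by_cases hr2 : s(p,r) = f
        · rw [hr2, hVf]
          exact hvblf p q (hr2 ▸ Sym2.mem_mk_left p r) (hG'adj p q h1 hq1 hq2)
        rw [hVo _ hr1 hr2]
        exact val_proper (hG'adj p q h1 hq1 hq2) (hG'adj p r h2 hr1 hr2) hqr
    have hncd : m c' ≠ m d := fun h => hnab (k_cd2 _ _ _ _ hsum4 h)
    obtain ⟨kd1, kd2, kd3, kd4, kd5⟩ :=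
      k_disj (m a) (m b) (m c') (m d) hma0 hmb0 hmc0 hmd0 hnab hncd hsum4
    set hh : V → Fin 2 → K2 := fun u i =>
      if i = 0 then (if u = a then m a else m b) else (if u = c' then m c' else m d)
      with hhh
    set T := m a + m b with hT
    set valH := Sym2.lift ⟨gfun val hh T, gfun_symm val hh T⟩ with hvalH
    have hl : ∀ p q : V ⊕ Fin 2, valH s(p,q) = gfun val hh T p q := by
      intro p q
      rw [hvalH, Sym2.lift_mk]
    have Ell : ∀ u v', valH s(.inl u, .inl v') = val s(u, v') := by
      intro u v'; rw [hl]; rfl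
    have E0a : valH s(.inl a, .inr 0) = m a := by
      rw [hl]; show hh a 0 = m a; simp [hhh]
    have E0o : ∀ u, u ≠ a → valH s(.inl u, .inr 0) = m b := by
      intro u hu; rw [hl]; show hh u 0 = m b; simp [hhh, hu]
    have E1c : valH s(.inl c', .inr 1) = m c' := by
      rw [hl]; show hh c' 1 = m c'; simp [hhh]
    have E1o : ∀ u, u ≠ c' → valH s(.inl u, .inr 1) = m d := by
      intro u hu; rw [hl]; show hh u 1 = m d; simp [hhh, hu]
    have Err : ∀ i j : Fin 2, i ≠ j → valH s(.inr i, .inr j) = T := by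
      intro i j hij
      rw [hl]
      show (if i = j then 0 else T) = T
      rw [if_neg hij]
    have mem_e : ∀ u : V, u ∈ e → u = a ∨ u = b := by
      intro u hu; rwa [hab, Sym2.mem_iff] at hu
    have mem_f : ∀ u : V, u ∈ f → u = c' ∨ u = d := by
      intro u hu; rwa [hcd, Sym2.mem_iff] at hu
    have h0lr : ∀ u (j : Fin 2), (IExtension G e f).Adj (.inl u) (.inr j) →
        valH s(.inl u, .inr j) ≠ 0 := by
      intro u j hadj
      rcases fin2_cases j with rfl | rfl
      · rcases mem_e u ((iext_adj_inl_inr0 G e f u).1 hadj) with rfl | rfl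
        · rw [E0a]; exact hma0
        · rw [E0o u hne_ab.symm]; exact hmb0
      · rcases mem_f u ((iext_adj_inl_inr1 G e f u).1 hadj) with rfl | rfl
        · rw [E1c]; exact hmc0
        · rw [E1o u hne_cd.symm]; exact hmd0
    refine colourable_of_val _ valH ?_ ?_
    · rintro (u | i) (v' | j) hadj
      · rw [Ell]
        exact val_ne ((iext_adj_inl_inl G e f u v').1 hadj)
      · exact h0lr u j hadj
      · rw [Sym2.eq_swap]
        exact h0lr v' i hadj.symm
      · rw [Err i j ((iext_adj_inr_inr G e f i j).1 hadj)]
        exact kd1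
    · have hA : ∀ v' u (j : Fin 2), (IExtension G e f).Adj (.inl v') (.inl u) →
          (IExtension G e f).Adj (.inl v') (.inr j) →
          valH s(.inl v', .inl u) ≠ valH s(.inl v', .inr j) := by
        intro v' u j h1 h2
        have hadj' : G'.Adj v' u := (iext_adj_inl_inl G e f v' u).1 h1
        rw [Ell]
        rcases fin2_cases j with rfl | rfl
        · rcases mem_e v' ((iext_adj_inl_inr0 G e f v').1 h2) with rfl | rfl
          · rw [E0a]; exact hvala u hadj'
          · rw [E0o v' hne_ab.symm]; exact hvalb u hadj'
        · rcases mem_f v' ((iext_adj_inl_inr1 G e f v').1 h2) with rfl | rfl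
          · rw [E1c]; exact hvalc u hadj'
          · rw [E1o v' hne_cd.symm]; exact hvald u hadj'
      have hB : ∀ v', (IExtension G e f).Adj (.inl v') (.inr 0) →
          (IExtension G e f).Adj (.inl v') (.inr 1) →
          valH s(.inl v', .inr 0) ≠ valH s(.inl v', .inr 1) := by
        intro v' h1 h2
        exact absurd ((iext_adj_inl_inr1 G e f v').1 h2)
          (hshare v' ((iext_adj_inl_inr0 G e f v').1 h1))
      have hC : ∀ (j : Fin 2) u u', u ≠ u' → (IExtension G e f).Adj (.inr j) (.inl u) →
          (IExtension G e f).Adj (.inr j) (.inl u') →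
          valH s(.inr j, .inl u) ≠ valH s(.inr j, .inl u') := by
        intro j u u' huu' h1 h2
        rw [Sym2.eq_swap (a := Sum.inr j), Sym2.eq_swap (a := Sum.inr j)]
        rcases fin2_cases j with rfl | rfl
        · rcases mem_e u ((iext_adj_inl_inr0 G e f u).1 h1.symm) with rfl | rfl <;>
            rcases mem_e u' ((iext_adj_inl_inr0 G e f u').1 h2.symm) with rfl | rfl
          · exact absurd rfl huu'
          · rw [E0a, E0o u' hne_ab.symm]; exact hnab
          · rw [E0o u hne_ab.symm, E0a]; exact fun hcon => hnab hcon.symm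
          · exact absurd rfl huu'
        · rcases mem_f u ((iext_adj_inl_inr1 G e f u).1 h1.symm) with rfl | rfl <;>
            rcases mem_f u' ((iext_adj_inl_inr1 G e f u').1 h2.symm) with rfl | rfl
          · exact absurd rfl huu'
          · rw [E1c, E1o u' hne_cd.symm]; exact hncd
          · rw [E1o u hne_cd.symm, E1c]; exact fun hcon => hncd hcon.symm
          · exact absurd rfl huu'
      have hD : ∀ (i j : Fin 2) u, i ≠ j → (IExtension G e f).Adj (.inr i) (.inl u) →
          valH s(.inr i, .inl u) ≠ valH s(.inr i, .inr j) := by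
        intro i j u hij h1
        rw [Sym2.eq_swap (a := Sum.inr i) (b := Sum.inl u), Err i j hij]
        rcases fin2_cases i with rfl | rfl
        · rcases mem_e u ((iext_adj_inl_inr0 G e f u).1 h1.symm) with rfl | rfl
          · rw [E0a]; exact fun hcon => kd2 hcon.symm
          · rw [E0o u hne_ab.symm]; exact fun hcon => kd3 hcon.symm
        · rcases mem_f u ((iext_adj_inl_inr1 G e f u).1 h1.symm) with rfl | rfl
          · rw [E1c]; exact fun hcon => kd4 hcon.symm
          · rw [E1o u hne_cd.symm]; exact fun hcon => kd5 hcon.symm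
      rintro (v' | i) (u | j) (u' | j') h1 h2 hqr
      · rw [Ell, Ell]
        exact val_proper ((iext_adj_inl_inl G e f v' u).1 h1)
          ((iext_adj_inl_inl G e f v' u').1 h2) (fun hcon => hqr (by rw [hcon]))
      · exact hA v' u j' h1 h2
      · exact (hA v' u' j h2 h1).symm
      · have hjj : j ≠ j' := fun hcon => hqr (by rw [hcon])
        rcases fin2_cases j with rfl | rfl <;> rcases fin2_cases j' with rfl | rfl
        · exact absurd rfl hjj
        · exact hB v' h1 h2
        · exact (hB v' h2 h1).symm
        · exact absurd rfl hjj
      · exact hC i u u' (fun hcon => hqr (by rw [hcon])) h1 h2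
      · exact hD i j' u ((iext_adj_inr_inr G e f i j').1 h2) h1
      · exact (hD i j u' ((iext_adj_inr_inr G e f i j).1 h1) h2).symm
      · have hij : i ≠ j := (iext_adj_inr_inr G e f i j).1 h1
        have hij' : i ≠ j' := (iext_adj_inr_inr G e f i j').1 h2
        exact absurd (by
          rcases fin2_cases i with rfl | rfl <;> rcases fin2_cases j with rfl | rfl <;>
            rcases fin2_cases j' with rfl | rfl <;> first | rfl | (exact absurd rfl hij) |
            (exact absurd rfl hij') : j = j') (fun hcon => hqr (by rw [hcon]))

end Snark12

/-- For a snark `G` and distinct edges `e`, `f`, the I-extension `G(e,f)`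
is a snark if and only if `G - {e,f}` admits no proper 3-edge-colouring. -/
theorem stmt_12 {V : Type} [Fintype V] (G : SimpleGraph V) (hG : IsSnark G)
    (e f : Sym2 V) (he : e ∈ G.edgeSet) (hf : f ∈ G.edgeSet) (hef : e ≠ f) :
    IsSnark (IExtension G e f) ↔ ¬ Colourable3 (G.deleteEdges {e, f}) := by
  constructor
  · intro hsn
    intro hcol
    exact hsn.2.2 (Snark12.iext_colourable G e f he hf hef hG.2.1 hG.2.2 hcol)
  · intro hncol'
    refine ⟨Snark12.iext_connected G e f he hf hG.1,
      Snark12.iext_cubic G e f he hf hef hG.2.1, ?_⟩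
    intro hcol
    exact hncol' (Snark12.colourable_del_of_iext G e f hcol)
end

section
/- Let G be a cyclically 4-edge-connected cubic graph, let S be a cycle-separating 4-edge-cut of G, and let K be a component of G − S. Then either any two nontrivial 2-edge-cuts of K are comparable, or K is a cycle of length 4. -/
open SimpleGraph

/-- Two edge-cuts of `H` (each leaving two components) are comparable: some component of
`H - R` is contained in some component of `H - T` or vice versa. -/
def ComparableCuts {W : Type} (H : SimpleGraph W) (R T : Set (Sym2 W)) : Prop :=
  ∃ (A : (H.deleteEdges R).ConnectedComponent) (B : (H.deleteEdges T).ConnectedComponent),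
    A.supp ⊆ B.supp ∨ B.supp ⊆ A.supp

/-- An edge-cut is nontrivial if it is not the set of all edges incident with one vertex. -/
def NontrivialCut {W : Type} (H : SimpleGraph W) (T : Set (Sym2 W)) : Prop :=
  ¬ ∃ v : W, T = {e | e ∈ H.edgeSet ∧ v ∈ e}

/-!
No edge of `S` joins two vertices of the component `K`: otherwise the other three edges of `S`
would already be cycle-separating. So `K` is an induced subgraph of `G` with at most four
boundary edges and a cycle outside it, and cubicity together with cyclic 4-edge-connectivity
gives `|∂X| ≥ min 4 (|X| + 2)` for every nonempty `X ⊆ K`. Now count boundary edges of a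
partition of `K`: every part has at least three, an edge of a 2-edge-cut of `K` lies in at most
two of them and an edge of `∂K` in at most one. Hence a 2-edge-cut leaves exactly two components
(`3 · 3 > 2 · 2 + 4`), and two crossing 2-edge-cuts cut `K` into four nonempty quadrants with
`4 · 3 ≤ 2 · 4 + 4` boundary edges: all bounds are tight, so every quadrant is a single vertex
with exactly one edge leaving `K`, and `K` is a 4-cycle.
-/

open Function

lemma Sym2.mk_right_injective {α : Type} (a : α) : Injective fun b : α => s(a, b) :=
  fun _ _ h => Sym2.congr_right.mp h

section EdgeBoundary

variable {V : Type} {G : SimpleGraph V}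

lemma mk_mem_edgeBoundary_iff {X : Set V} {a b : V} :
    s(a, b) ∈ edgeBoundary G X ↔ G.Adj a b ∧ (a ∈ X ↔ b ∉ X) := by
  constructor
  · rintro ⟨hab, u, v, huv, hu, hv⟩
    rcases Sym2.eq_iff.mp huv with ⟨rfl, rfl⟩ | ⟨rfl, rfl⟩ <;> simp_all [G.adj_comm]
  · rintro ⟨hab, h⟩
    by_cases ha : a ∈ X
    · exact ⟨hab, a, b, rfl, ha, h.mp ha⟩
    · exact ⟨hab, b, a, Sym2.eq_swap, not_not.mp (mt h.mpr ha), ha⟩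

lemma edgeBoundary_subset_edgeSet (X : Set V) : edgeBoundary G X ⊆ G.edgeSet :=
  fun _ he => he.1

@[simp]
lemma edgeBoundary_empty : edgeBoundary G ∅ = ∅ :=
  Set.eq_empty_of_forall_notMem fun _ ⟨_, _, _, _, h, _⟩ => h

lemma edgeBoundary_inter_subset (X Y : Set V) :
    edgeBoundary G (X ∩ Y) ⊆ edgeBoundary G X ∪ edgeBoundary G Y := by
  rintro _ ⟨hab, a, b, rfl, ⟨haX, haY⟩, hb⟩
  by_cases hbX : b ∈ X
  · exact Or.inr ⟨hab, a, b, rfl, haY, fun hbY => hb ⟨hbX, hbY⟩⟩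
  · exact Or.inl ⟨hab, a, b, rfl, haX, hbX⟩

lemma edgeBoundary_inter_edgeBoundary_singleton_of_mem {X : Set V} {v : V} (hv : v ∈ X) :
    edgeBoundary G X ∩ edgeBoundary G {v} = (fun w => s(v, w)) '' (G.neighborSet v \ X) := by
  ext e
  induction e using Sym2.ind with
  | _ a b =>
    simp only [Set.mem_inter_iff, mk_mem_edgeBoundary_iff, Set.mem_singleton_iff,
      Set.mem_image, Set.mem_sdiff, mem_neighborSet, Sym2.eq_iff]
    constructor
    · rintro ⟨⟨hab, h⟩, -, h'⟩
      by_cases ha : a = v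
      · subst ha
        exact ⟨b, ⟨hab, h.mp hv⟩, Or.inl ⟨rfl, rfl⟩⟩
      · obtain rfl : b = v := not_not.mp (mt h'.mpr ha)
        exact ⟨a, ⟨hab.symm, fun haX => h.mp haX hv⟩, Or.inr ⟨rfl, rfl⟩⟩
    · rintro ⟨w, ⟨hw, hwX⟩, ⟨rfl, rfl⟩ | ⟨rfl, rfl⟩⟩
      · exact ⟨⟨hw, by simp [hv, hwX]⟩, hw, by simp [hw.ne']⟩
      · exact ⟨⟨hw.symm, by simp [hv, hwX]⟩, hw.symm, by simp [hw.ne']⟩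

lemma edgeBoundary_compl (X : Set V) : edgeBoundary G Xᶜ = edgeBoundary G X := by
  ext e
  induction e using Sym2.ind with
  | _ a b => simp only [mk_mem_edgeBoundary_iff, Set.mem_compl_iff]; tauto

lemma edgeBoundary_inter_edgeBoundary_singleton_of_notMem {X : Set V} {v : V} (hv : v ∉ X) :
    edgeBoundary G X ∩ edgeBoundary G {v} = (fun w => s(v, w)) '' (G.neighborSet v ∩ X) := by
  rw [← edgeBoundary_compl X, edgeBoundary_inter_edgeBoundary_singleton_of_mem hv,
    Set.sdiff_compl]

lemma edgeBoundary_sdiff_singleton_sdiff_edgeBoundary_singleton (X : Set V) (v : V) :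
    edgeBoundary G (X \ {v}) \ edgeBoundary G {v} = edgeBoundary G X \ edgeBoundary G {v} := by
  ext e
  induction e using Sym2.ind with
  | _ a b =>
    simp only [Set.mem_sdiff, mk_mem_edgeBoundary_iff, Set.mem_singleton_iff]
    constructor <;> rintro ⟨⟨hab, h⟩, h'⟩ <;> refine ⟨⟨hab, ?_⟩, h'⟩ <;>
      by_cases ha : a = v <;> by_cases hb : b = v <;> simp_all

lemma neighborSet_inter_sdiff_singleton (X : Set V) (v : V) :
    G.neighborSet v ∩ (X \ {v}) = G.neighborSet v ∩ X := by
  ext w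
  simp only [Set.mem_inter_iff, Set.mem_sdiff, Set.mem_singleton_iff, mem_neighborSet]
  exact ⟨fun ⟨hw, hwX, _⟩ => ⟨hw, hwX⟩, fun ⟨hw, hwX⟩ => ⟨hw, hwX, hw.ne'⟩⟩

end EdgeBoundary

lemma Fintype.forall_eq_of_forall_le_of_sum_le {ι : Type} [Fintype ι] {f : ι → ℕ} {a : ℕ}
    (h : ∀ i, a ≤ f i) (hsum : ∑ i, f i ≤ Fintype.card ι * a) (i : ι) : f i = a := by
  have hconst : ∑ _i : ι, a = Fintype.card ι * a := by simp
  exact ((Finset.sum_eq_sum_iff_of_le fun i _ => h i).mp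
    (le_antisymm (Finset.sum_le_sum fun i _ => h i) (hsum.trans_eq hconst.symm)) i
    (Finset.mem_univ i)).symm

lemma Fintype.forall_eq_of_forall_le_of_le_sum {ι : Type} [Fintype ι] {f : ι → ℕ} {a : ℕ}
    (h : ∀ i, f i ≤ a) (hsum : Fintype.card ι * a ≤ ∑ i, f i) (i : ι) : f i = a := by
  have hconst : ∑ _i : ι, a = Fintype.card ι * a := by simp
  exact (Finset.sum_eq_sum_iff_of_le fun i _ => h i).mp
    (le_antisymm (Finset.sum_le_sum fun i _ => h i) (hconst.trans_le hsum)) i (Finset.mem_univ i)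

lemma sum_ncard_inter_le_mul {α ι : Type} [Fintype ι] [Finite α] {F : Set α} {B : ι → Set α}
    {m : ℕ} (h : ∀ a ∈ F, {i | a ∈ B i}.ncard ≤ m) : ∑ i, (F ∩ B i).ncard ≤ m * F.ncard := by
  classical
  have := Fintype.ofFinite α
  calc ∑ i, (F ∩ B i).ncard = ∑ i, ∑ a ∈ F.toFinset, if a ∈ B i then 1 else 0 := by
        refine Finset.sum_congr rfl fun i _ => ?_
        rw [← Finset.card_filter, Set.ncard_eq_toFinset_card']
        congr 1
        ext a
        simp
    _ = ∑ a ∈ F.toFinset, {i | a ∈ B i}.ncard := by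
        rw [Finset.sum_comm]
        refine Finset.sum_congr rfl fun a _ => ?_
        rw [← Finset.card_filter, Set.ncard_eq_toFinset_card']
        congr 1
        ext i
        simp
    _ ≤ ∑ _a ∈ F.toFinset, m := Finset.sum_le_sum fun a ha => h a (by simpa using ha)
    _ = m * F.ncard := by rw [Finset.sum_const, smul_eq_mul, Set.ncard_eq_toFinset_card', mul_comm]

lemma ncard_setOf_mem_le_one {α ι : Type} [Finite ι] {X : ι → Set α}
    (hX : Pairwise (Disjoint on X)) (a : α) : {i | a ∈ X i}.ncard ≤ 1 :=
  (Set.ncard_le_one).mpr fun i hi j hj => hX.eq (Set.not_disjoint_iff.mpr ⟨a, hi, hj⟩)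

section DisjointFamily

variable {V ι : Type} [Finite V] [Fintype ι] {G : SimpleGraph V} {X : ι → Set V}

lemma sum_ncard_inter_edgeBoundary_le (hX : Pairwise (Disjoint on X)) (F : Set (Sym2 V)) :
    ∑ i, (F ∩ edgeBoundary G (X i)).ncard ≤ 2 * F.ncard := by
  refine sum_ncard_inter_le_mul fun e _ => ?_
  induction e using Sym2.ind with
  | _ a b =>
    calc {i | s(a, b) ∈ edgeBoundary G (X i)}.ncard
        ≤ ({i | a ∈ X i} ∪ {i | b ∈ X i}).ncard := by
          refine Set.ncard_le_ncard (fun i hi => ?_)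
          by_cases ha : a ∈ X i
          · exact Or.inl ha
          · exact Or.inr (not_not.mp (mt (mk_mem_edgeBoundary_iff.mp hi).2.mpr ha))
      _ ≤ 1 + 1 := (Set.ncard_union_le _ _).trans
          (add_le_add (ncard_setOf_mem_le_one hX a) (ncard_setOf_mem_le_one hX b))

lemma sum_ncard_edgeBoundary_inter_le {C : Set V} (hX : Pairwise (Disjoint on X))
    (hXC : ∀ i, X i ⊆ C) :
    ∑ i, (edgeBoundary G C ∩ edgeBoundary G (X i)).ncard ≤ (edgeBoundary G C).ncard := by
  refine (sum_ncard_inter_le_mul (m := 1) fun e he => ?_).trans_eq (one_mul _)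
  obtain ⟨-, a, b, rfl, ha, hb⟩ := he
  refine (Set.ncard_le_ncard fun i hi => ?_).trans (ncard_setOf_mem_le_one hX a)
  by_contra ha'
  exact hb (hXC i (not_not.mp (mt (mk_mem_edgeBoundary_iff.mp hi).2.mpr ha')))

lemma sum_ncard_edgeBoundary_le {C : Set V} (hX : Pairwise (Disjoint on X)) {E : Set (Sym2 V)}
    (hbd : ∀ i, edgeBoundary G (X i) ⊆ E ∪ edgeBoundary G C) :
    ∑ i, (edgeBoundary G (X i)).ncard
      ≤ 2 * E.ncard + ∑ i, (edgeBoundary G C ∩ edgeBoundary G (X i)).ncard := by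
  calc ∑ i, (edgeBoundary G (X i)).ncard
      ≤ ∑ i, ((E ∩ edgeBoundary G (X i)).ncard
          + (edgeBoundary G C ∩ edgeBoundary G (X i)).ncard) :=
        Finset.sum_le_sum fun i _ => (Set.ncard_le_ncard fun e he =>
          (hbd i he).imp (⟨·, he⟩) (⟨·, he⟩)).trans (Set.ncard_union_le _ _)
    _ ≤ _ := by
        rw [Finset.sum_add_distrib]
        exact Nat.add_le_add_right (sum_ncard_inter_edgeBoundary_le hX E) _

end DisjointFamily

section Cubic

variable {V : Type} {G : SimpleGraph V}

lemma IsCubic.ncard_neighborSet (hG : IsCubic G) (v : V) : (G.neighborSet v).ncard = 3 := by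
  rw [← Nat.card_coe_set_eq, hG v]

variable [Finite V]

lemma IsCubic.ncard_edgeBoundary_inter_edgeBoundary_singleton_add (hG : IsCubic G) {C : Set V}
    {v : V} (hv : v ∈ C) :
    (edgeBoundary G C ∩ edgeBoundary G {v}).ncard + (G.neighborSet v ∩ C).ncard = 3 := by
  rw [edgeBoundary_inter_edgeBoundary_singleton_of_mem hv,
    Set.ncard_image_of_injective _ (Sym2.mk_right_injective v), add_comm,
    Set.ncard_inter_add_ncard_sdiff_eq_ncard, hG.ncard_neighborSet]

lemma IsCubic.ncard_edgeBoundary_add (hG : IsCubic G) {X : Set V} {v : V} (hv : v ∈ X) :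
    (edgeBoundary G X).ncard + 2 * (G.neighborSet v ∩ X).ncard
      = (edgeBoundary G (X \ {v})).ncard + 3 := by
  have hX := Set.ncard_inter_add_ncard_sdiff_eq_ncard (edgeBoundary G X) (edgeBoundary G {v})
  have hXv := Set.ncard_inter_add_ncard_sdiff_eq_ncard (edgeBoundary G (X \ {v}))
    (edgeBoundary G {v})
  have hsplit := hG.ncard_edgeBoundary_inter_edgeBoundary_singleton_add hv
  rw [edgeBoundary_inter_edgeBoundary_singleton_of_mem hv,
    Set.ncard_image_of_injective _ (Sym2.mk_right_injective v)] at hX hsplit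
  rw [edgeBoundary_inter_edgeBoundary_singleton_of_notMem (fun h => h.2 rfl),
    Set.ncard_image_of_injective _ (Sym2.mk_right_injective v),
    neighborSet_inter_sdiff_singleton, edgeBoundary_sdiff_singleton_sdiff_edgeBoundary_singleton]
    at hXv
  omega

lemma IsCubic.ncard_edgeBoundary_singleton (hG : IsCubic G) (v : V) :
    (edgeBoundary G {v}).ncard = 3 := by
  simpa using hG.ncard_edgeBoundary_add (Set.mem_singleton v)

end Cubic

section Cycles

variable {V : Type} {G : SimpleGraph V}

lemma SimpleGraph.IsAcyclic.exists_ncard_neighborSet_le_one [Finite V] [Nonempty V]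
    (h : G.IsAcyclic) : ∃ v, (G.neighborSet v).ncard ≤ 1 := by
  obtain ⟨u, v, p, hp, hmax⟩ := Walk.exists_isPath_forall_isPath_length_le_length G
  refine ⟨v, (Set.ncard_le_ncard (t := {p.penultimate}) fun w hw => ?_).trans
    (Set.ncard_singleton _).le⟩
  have hw : G.Adj v w := hw
  refine h.eq_penultimate_of_adj_end hp hw (by_contra fun hw' => ?_)
  have := hmax _ _ _ (hp.concat hw' hw)
  rw [Walk.length_concat] at this
  omega

lemma ncard_neighborSet_induce (X : Set V) (v : X) :
    ((G.induce X).neighborSet v).ncard = (G.neighborSet v ∩ X).ncard := by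
  rw [← Set.ncard_image_of_injective _ Subtype.val_injective]
  congr 1
  ext w
  simp only [Set.mem_image, mem_neighborSet, comap_adj, Function.Embedding.coe_subtype,
    Set.mem_inter_iff]
  constructor
  · rintro ⟨w, hw, rfl⟩
    exact ⟨hw, w.2⟩
  · exact fun ⟨hw, hwX⟩ => ⟨⟨w, hwX⟩, hw, rfl⟩

lemma exists_isCycle_of_two_le_ncard_neighborSet_inter [Finite V] {X : Set V} (hX : X.Nonempty)
    (hdeg : ∀ v ∈ X, 2 ≤ (G.neighborSet v ∩ X).ncard) :
    ∃ (w : V) (p : G.Walk w w), p.IsCycle ∧ ∀ x ∈ p.support, x ∈ X := by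
  have : Nonempty X := hX.to_subtype
  by_contra hno
  have hacyclic : (G.induce X).IsAcyclic := fun w p hp =>
    hno ⟨(Embedding.induce X).toHom w, p.map (Embedding.induce X).toHom,
      (Walk.isCycle_map_iff_of_injective Subtype.val_injective).mpr hp, fun x hx => by
        rw [Walk.support_map, List.mem_map] at hx
        obtain ⟨y, -, rfl⟩ := hx
        exact y.2⟩
  obtain ⟨v, hv⟩ := hacyclic.exists_ncard_neighborSet_le_one
  have := hdeg v v.2
  rw [ncard_neighborSet_induce] at hv
  omega

lemma cycleSeparating_edgeBoundary {X : Set V} {u v : V} {p : G.Walk u u} {q : G.Walk v v}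
    (hp : p.IsCycle) (hq : q.IsCycle) (hpX : ∀ x ∈ p.support, x ∈ X)
    (hqX : ∀ x ∈ q.support, x ∉ X) : CycleSeparating G (edgeBoundary G X) := by
  have hp' : ∀ e ∈ p.edges, e ∉ edgeBoundary G X := fun e he hb => by
    obtain ⟨-, a, b, rfl, -, hb⟩ := hb
    exact hb (hpX b (p.snd_mem_support_of_mem_edges he))
  have hq' : ∀ e ∈ q.edges, e ∉ edgeBoundary G X := fun e he hb => by
    obtain ⟨-, a, b, rfl, ha, -⟩ := hb
    exact hqX a (q.fst_mem_support_of_mem_edges he) ha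
  refine ⟨edgeBoundary_subset_edgeSet X, u, v, _, _, Walk.IsCycle.toDeleteEdges G _ hp hp',
    Walk.IsCycle.toDeleteEdges G _ hq hq', fun ⟨r⟩ => ?_⟩
  obtain ⟨d, -, hd, hd'⟩ := r.exists_boundary_dart X (hpX u p.start_mem_support)
    (hqX v q.start_mem_support)
  have hadj := d.adj
  rw [deleteEdges_adj] at hadj
  exact hadj.2 ⟨hadj.1, _, _, rfl, hd, hd'⟩

/-- Peel off vertices with at most one neighbour in `X`, each of which adds a boundary edge, until
what is left contains a cycle; then `∂X` is cycle-separating. -/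
lemma IsCubic.min_le_ncard_edgeBoundary [Finite V] (hG : IsCubic G) {k : ℕ}
    (hk : CyclicallyEdgeConnected G k) {v : V} {q : G.Walk v v} (hq : q.IsCycle) {X : Set V}
    (hX : X.Nonempty) (hqX : ∀ x ∈ q.support, x ∉ X) :
    min k (X.ncard + 2) ≤ (edgeBoundary G X).ncard := by
  induction hn : X.ncard using Nat.strong_induction_on generalizing X with
  | _ n ih =>
    by_cases hleaf : ∃ v ∈ X, (G.neighborSet v ∩ X).ncard ≤ 1
    · obtain ⟨v, hvX, hv⟩ := hleaf
      have key := hG.ncard_edgeBoundary_add hvX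
      rw [← neighborSet_inter_sdiff_singleton] at key hv
      have hcard : (X \ {v}).ncard + 1 = n := by
        rw [Set.ncard_sdiff_singleton_add_one hvX, hn]
      rcases (X \ {v}).eq_empty_or_nonempty with hempty | hne
      · rw [hempty] at key hcard
        simp only [edgeBoundary_empty, Set.inter_empty, Set.ncard_empty] at key hcard
        omega
      · have := ih _ (by omega) hne (fun x hx hxX => hqX x hx hxX.1) rfl
        omega
    · push Not at hleaf
      obtain ⟨w, p, hp, hpX⟩ := exists_isCycle_of_two_le_ncard_neighborSet_inter hX hleaf
      refine (min_le_left _ _).trans (not_lt.mp fun hlt => hk _ ?_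
        (cycleSeparating_edgeBoundary hp hq hpX hqX))
      rwa [Nat.card_coe_set_eq]

end Cycles

section DeleteEdges

variable {V : Type} {G : SimpleGraph V} {S : Set (Sym2 V)}

lemma edgeBoundary_supp_subset (c : (G.deleteEdges S).ConnectedComponent) :
    edgeBoundary G c.supp ⊆ S := by
  rintro _ ⟨hab, a, b, rfl, ha, hb⟩
  by_contra hS
  exact hb ((c.mem_supp_congr_adj (deleteEdges_adj.mpr ⟨hab, hS⟩)).mp ha)

lemma CycleSeparating.exists_isCycle_forall_notMem_supp (hS : CycleSeparating G S)
    (c : (G.deleteEdges S).ConnectedComponent) :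
    ∃ (v : V) (q : G.Walk v v), q.IsCycle ∧ ∀ x ∈ q.support, x ∉ c.supp := by
  classical
  obtain ⟨-, u, v, p, q, hp, hq, huv⟩ := hS
  have key : ∀ {w : V} (r : (G.deleteEdges S).Walk w w), r.IsCycle → w ∉ c.supp →
      ∃ (v : V) (q : G.Walk v v), q.IsCycle ∧ ∀ x ∈ q.support, x ∉ c.supp :=
    fun r hr hw => ⟨_, r.mapLe (G.deleteEdges_le S), hr.mapLe _, fun x hx hxc => hw <| by
      rw [Walk.support_mapLe_eq_support] at hx
      exact (c.mem_supp_iff _).mpr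
        (((c.mem_supp_iff x).mp hxc) ▸ ConnectedComponent.sound ⟨r.takeUntil x hx⟩)⟩
  by_cases hu : u ∈ c.supp
  · exact key q hq fun hv => huv (ConnectedComponent.exact (hu.trans hv.symm))
  · exact key p hp hu

/-- Deleting such an edge from `S` merges no components of `G - S`, so the rest of `S` would be a
smaller cycle-separating cut. -/
lemma CycleSeparating.notMem_of_mem_supp [Finite V] {k : ℕ} (hk : CyclicallyEdgeConnected G k)
    (hS : CycleSeparating G S) (hcard : Nat.card S = k)
    {c : (G.deleteEdges S).ConnectedComponent} {a b : V} (ha : a ∈ c.supp) (hb : b ∈ c.supp) :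
    s(a, b) ∉ S := by
  intro hab
  have hreach : (G.deleteEdges S).Reachable a b :=
    ConnectedComponent.exact (ha.trans hb.symm)
  have hlift : ∀ {x y : V}, (G.deleteEdges (S \ {s(a, b)})).Walk x y →
      (G.deleteEdges S).Reachable x y := by
    intro x y r
    induction r with
    | nil => rfl
    | @cons x z y hxz _ ih =>
      refine Reachable.trans ?_ ih
      by_cases hS' : s(x, z) ∈ S
      · have hxz' : s(x, z) = s(a, b) := by
          by_contra hne
          exact (deleteEdges_adj.mp hxz).2 ⟨hS', hne⟩
        rcases Sym2.eq_iff.mp hxz' with ⟨rfl, rfl⟩ | ⟨rfl, rfl⟩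
        exacts [hreach, hreach.symm]
      · exact (deleteEdges_adj.mpr ⟨(deleteEdges_adj.mp hxz).1, hS'⟩).reachable
  refine hk (S \ {s(a, b)}) ?_ ?_
  · rw [Nat.card_coe_set_eq, Set.ncard_sdiff_singleton_of_mem hab, ← Nat.card_coe_set_eq, hcard]
    have : 0 < k := hcard ▸ Nat.card_pos_iff.mpr ⟨⟨⟨_, hab⟩⟩, inferInstance⟩
    omega
  · obtain ⟨hSG, u, v, p, q, hp, hq, huv⟩ := hS
    have hle : G.deleteEdges S ≤ G.deleteEdges (S \ {s(a, b)}) :=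
      deleteEdges_anti Set.sdiff_subset
    exact ⟨Set.sdiff_subset.trans hSG, u, v, p.mapLe hle, q.mapLe hle, hp.mapLe hle,
      hq.mapLe hle, fun ⟨r⟩ => huv (hlift r)⟩

lemma CycleSeparating.induce_supp_deleteEdges [Finite V] {k : ℕ}
    (hk : CyclicallyEdgeConnected G k) (hS : CycleSeparating G S) (hcard : Nat.card S = k)
    (c : (G.deleteEdges S).ConnectedComponent) :
    (G.deleteEdges S).induce c.supp = G.induce c.supp := by
  ext a b
  simp only [comap_adj, Function.Embedding.coe_subtype, deleteEdges_adj, and_iff_left_iff_imp]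
  exact fun _ => hS.notMem_of_mem_supp hk hcard a.2 b.2

end DeleteEdges

section Cuts

variable {V : Type} {G : SimpleGraph V}

lemma edgeBoundary_image_supp_subset {C : Set V} (R : Set (Sym2 C))
    (A : ((G.induce C).deleteEdges R).ConnectedComponent) :
    edgeBoundary G (Subtype.val '' A.supp) ⊆ Sym2.map Subtype.val '' R ∪ edgeBoundary G C := by
  rintro _ ⟨hab, _, b, rfl, ⟨a, haA, rfl⟩, hb⟩
  by_cases hbC : b ∈ C
  · left
    by_contra hR
    refine hb ⟨⟨b, hbC⟩, (A.mem_supp_congr_adj ?_).mp haA, rfl⟩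
    exact deleteEdges_adj.mpr ⟨hab, fun h => hR ⟨_, h, rfl⟩⟩
  · exact Or.inr ⟨hab, a, b, rfl, a.2, hbC⟩

lemma two_le_card_connectedComponent {W : Type} [Finite W] [Nonempty W] {H : SimpleGraph W}
    (h : ¬H.Connected) : 2 ≤ Nat.card H.ConnectedComponent := by
  by_contra hlt
  have : Subsingleton H.ConnectedComponent :=
    Finite.card_le_one_iff_subsingleton.mp (by omega)
  exact h ⟨fun u v => ConnectedComponent.exact (Subsingleton.elim _ _)⟩

lemma surjective_of_not_comparableCuts {W : Type} {H : SimpleGraph W} {R T : Set (Sym2 W)}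
    (hT : Nat.card (H.deleteEdges T).ConnectedComponent = 2) (h : ¬ComparableCuts H R T) :
    Surjective fun w =>
      ((H.deleteEdges R).connectedComponentMk w, (H.deleteEdges T).connectedComponentMk w) := by
  rintro ⟨A, B⟩
  obtain ⟨B', -, hB'⟩ := (Nat.card_eq_two_iff' B).mp hT
  obtain ⟨w, hwA, hwB'⟩ := Set.not_subset.mp fun hsub => h ⟨A, B', Or.inl hsub⟩
  exact ⟨w, Prod.ext hwA (by_contra fun hne => hwB' (hB' _ hne))⟩

lemma pairwise_disjoint_image_val_fiber {V ι : Type} {C : Set V} (φ : C → ι) :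
    Pairwise (Disjoint on fun i => Subtype.val '' (φ ⁻¹' {i})) :=
  fun _ _ hij => (Set.disjoint_image_iff Subtype.val_injective).mpr (pairwise_disjoint_fiber φ hij)

end Cuts

/-- What the argument uses about a component `C` of `G - S`, for a cycle-separating 4-edge-cut
`S` of a cyclically 4-edge-connected cubic graph `G` (see `CycleSeparating.isFourCutSide`). -/
structure IsFourCutSide {V : Type} (G : SimpleGraph V) (C : Set V) : Prop where
  isCubic : IsCubic G
  cyclicallyEdgeConnected : CyclicallyEdgeConnected G 4
  exists_isCycle : ∃ (v : V) (q : G.Walk v v), q.IsCycle ∧ ∀ x ∈ q.support, x ∉ C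
  ncard_edgeBoundary_le : (edgeBoundary G C).ncard ≤ 4

namespace IsFourCutSide

variable {V ι : Type} [Finite V] [Fintype ι] {G : SimpleGraph V} {C : Set V}

lemma min_le_ncard_edgeBoundary (hC : IsFourCutSide G C) {X : Set V} (hXC : X ⊆ C)
    (hX : X.Nonempty) : min 4 (X.ncard + 2) ≤ (edgeBoundary G X).ncard := by
  obtain ⟨v, q, hq, hqC⟩ := hC.exists_isCycle
  exact hC.isCubic.min_le_ncard_edgeBoundary hC.cyclicallyEdgeConnected hq hX
    fun x hx hxX => hqC x hx (hXC hxX)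

lemma three_le_ncard_edgeBoundary (hC : IsFourCutSide G C) {X : Set V} (hXC : X ⊆ C)
    (hX : X.Nonempty) : 3 ≤ (edgeBoundary G X).ncard := by
  have := hC.min_le_ncard_edgeBoundary hXC hX
  have := (Set.ncard_pos).mpr hX
  omega

lemma ncard_edgeBoundary_inter_edgeBoundary_singleton_le_one (hC : IsFourCutSide G C)
    (hC4 : C.ncard = 4) {v : V} (hv : v ∈ C) :
    (edgeBoundary G C ∩ edgeBoundary G {v}).ncard ≤ 1 := by
  have hcard : (C \ {v}).ncard = 3 := by rw [Set.ncard_sdiff_singleton_of_mem hv, hC4]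
  have hrest := hC.min_le_ncard_edgeBoundary (X := C \ {v}) Set.sdiff_subset
    (Set.nonempty_of_ncard_ne_zero (by omega))
  have key := hC.isCubic.ncard_edgeBoundary_add hv
  have hsplit := hC.isCubic.ncard_edgeBoundary_inter_edgeBoundary_singleton_add hv
  have := hC.ncard_edgeBoundary_le
  omega

lemma three_mul_card_le (hC : IsFourCutSide G C) {φ : C → ι} (hφ : Surjective φ)
    {E : Set (Sym2 V)}
    (hbd : ∀ i, edgeBoundary G (Subtype.val '' (φ ⁻¹' {i})) ⊆ E ∪ edgeBoundary G C) :
    3 * Fintype.card ι ≤ 2 * E.ncard + 4 := by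
  have hX := pairwise_disjoint_image_val_fiber φ
  have h3 : ∀ i, 3 ≤ (edgeBoundary G (Subtype.val '' (φ ⁻¹' {i}))).ncard := fun i => by
    obtain ⟨v, hv⟩ := hφ i
    exact hC.three_le_ncard_edgeBoundary (Subtype.coe_image_subset C _) ⟨v, v, hv, rfl⟩
  calc 3 * Fintype.card ι ≤ ∑ i, (edgeBoundary G (Subtype.val '' (φ ⁻¹' {i}))).ncard := by
        simpa [mul_comm] using Finset.card_nsmul_le_sum Finset.univ _ 3 fun i _ => h3 i
    _ ≤ 2 * E.ncard + (edgeBoundary G C).ncard :=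
        (sum_ncard_edgeBoundary_le hX hbd).trans (Nat.add_le_add_left
          (sum_ncard_edgeBoundary_inter_le hX fun i => Subtype.coe_image_subset C _) _)
    _ ≤ 2 * E.ncard + 4 := Nat.add_le_add_left hC.ncard_edgeBoundary_le _

lemma injective_of_card_eq_four (hC : IsFourCutSide G C) (hι : Fintype.card ι = 4) {φ : C → ι}
    (hφ : Surjective φ) {E : Set (Sym2 V)} (hE : E.ncard ≤ 4)
    (hbd : ∀ i, edgeBoundary G (Subtype.val '' (φ ⁻¹' {i})) ⊆ E ∪ edgeBoundary G C) :
    Injective φ := by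
  have hX := pairwise_disjoint_image_val_fiber φ
  have hne : ∀ i, (Subtype.val '' (φ ⁻¹' {i})).Nonempty := fun i =>
    let ⟨v, hv⟩ := hφ i; ⟨v, v, hv, rfl⟩
  have h3 : ∀ i, (edgeBoundary G (Subtype.val '' (φ ⁻¹' {i}))).ncard = 3 := by
    refine Fintype.forall_eq_of_forall_le_of_sum_le
      (fun i => hC.three_le_ncard_edgeBoundary (Subtype.coe_image_subset C _) (hne i)) ?_
    have := sum_ncard_edgeBoundary_le hX hbd
    have := sum_ncard_edgeBoundary_inter_le (G := G) hX fun i => Subtype.coe_image_subset C _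
    have := hC.ncard_edgeBoundary_le
    omega
  intro v w hvw
  have h1 : (Subtype.val '' (φ ⁻¹' {φ v})).ncard ≤ 1 := by
    have := hC.min_le_ncard_edgeBoundary (Subtype.coe_image_subset C _) (hne (φ v))
    have := h3 (φ v)
    omega
  exact Subtype.val_injective ((Set.ncard_le_one).mp h1 _ ⟨v, rfl, rfl⟩ _ ⟨w, hvw.symm, rfl⟩)

lemma ncard_neighborSet_inter_eq_two (hC : IsFourCutSide G C) (hι : Fintype.card ι = 4)
    {φ : C → ι} (hφ : Bijective φ) {E : Set (Sym2 V)} (hE : E.ncard ≤ 4)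
    (hbd : ∀ i, edgeBoundary G (Subtype.val '' (φ ⁻¹' {i})) ⊆ E ∪ edgeBoundary G C) (v : C) :
    (G.neighborSet v ∩ C).ncard = 2 := by
  have hfiber : ∀ w : C, Subtype.val '' (φ ⁻¹' {φ w}) = {(w : V)} := fun w => by
    ext x
    constructor
    · rintro ⟨u, hu, rfl⟩
      rw [hφ.1 hu]
      rfl
    · rintro rfl
      exact ⟨w, rfl, rfl⟩
  have hC4 : C.ncard = 4 := by
    rw [← Nat.card_coe_set_eq, Nat.card_eq_of_bijective φ hφ, Nat.card_eq_fintype_card, hι]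
  have h3 : ∀ i, (edgeBoundary G (Subtype.val '' (φ ⁻¹' {i}))).ncard = 3 := fun i => by
    obtain ⟨w, rfl⟩ := hφ.2 i
    rw [hfiber]
    exact hC.isCubic.ncard_edgeBoundary_singleton w
  have hle : ∀ i,
      (edgeBoundary G C ∩ edgeBoundary G (Subtype.val '' (φ ⁻¹' {i}))).ncard ≤ 1 := fun i => by
    obtain ⟨w, rfl⟩ := hφ.2 i
    rw [hfiber]
    exact hC.ncard_edgeBoundary_inter_edgeBoundary_singleton_le_one hC4 w.2
  have hsum := sum_ncard_edgeBoundary_le (pairwise_disjoint_image_val_fiber φ) hbd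
  rw [Finset.sum_congr rfl fun i _ => h3 i, Finset.sum_const, Finset.card_univ, hι,
    smul_eq_mul] at hsum
  have hout := Fintype.forall_eq_of_forall_le_of_le_sum hle (by rw [hι]; omega) (φ v)
  rw [hfiber] at hout
  have := hC.isCubic.ncard_edgeBoundary_inter_edgeBoundary_singleton_add v.2
  omega

lemma card_connectedComponent_eq_two (hC : IsFourCutSide G C) (hne : C.Nonempty)
    {R : Set (Sym2 C)} (hR : R.ncard ≤ 2) (hdis : ¬((G.induce C).deleteEdges R).Connected) :
    Nat.card ((G.induce C).deleteEdges R).ConnectedComponent = 2 := by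
  have : Nonempty C := hne.to_subtype
  have := Fintype.ofFinite ((G.induce C).deleteEdges R).ConnectedComponent
  have h3 := hC.three_mul_card_le (φ := ((G.induce C).deleteEdges R).connectedComponentMk)
    Quot.mk_surjective (edgeBoundary_image_supp_subset R)
  have hE := (Set.ncard_image_le (s := R) (f := Sym2.map Subtype.val)).trans hR
  have := two_le_card_connectedComponent hdis
  rw [Nat.card_eq_fintype_card] at this ⊢
  omega

theorem card_eq_four_of_not_comparableCuts (hC : IsFourCutSide G C) (hne : C.Nonempty)
    {R T : Set (Sym2 C)} (hR : R.ncard ≤ 2) (hT : T.ncard ≤ 2)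
    (hRdis : ¬((G.induce C).deleteEdges R).Connected)
    (hTdis : ¬((G.induce C).deleteEdges T).Connected)
    (hRT : ¬ComparableCuts (G.induce C) R T) :
    Nat.card C = 4 ∧ ∀ v : C, Nat.card ((G.induce C).neighborSet v) = 2 := by
  classical
  set φ := fun w : C =>
    (((G.induce C).deleteEdges R).connectedComponentMk w,
      ((G.induce C).deleteEdges T).connectedComponentMk w)
  have hφ : Surjective φ :=
    surjective_of_not_comparableCuts (hC.card_connectedComponent_eq_two hne hT hTdis) hRT
  have := Fintype.ofFinite (((G.induce C).deleteEdges R).ConnectedComponent ×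
    ((G.induce C).deleteEdges T).ConnectedComponent)
  have hι : Fintype.card (((G.induce C).deleteEdges R).ConnectedComponent ×
      ((G.induce C).deleteEdges T).ConnectedComponent) = 4 := by
    rw [← Nat.card_eq_fintype_card, Nat.card_prod, hC.card_connectedComponent_eq_two hne hR hRdis,
      hC.card_connectedComponent_eq_two hne hT hTdis]
  have hE : (Sym2.map Subtype.val '' R ∪ Sym2.map Subtype.val '' T).ncard ≤ 4 :=
    (Set.ncard_union_le _ _).trans (add_le_add ((Set.ncard_image_le).trans hR)
      ((Set.ncard_image_le).trans hT))
  have hbd : ∀ i, edgeBoundary G (Subtype.val '' (φ ⁻¹' {i}))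
      ⊆ (Sym2.map Subtype.val '' R ∪ Sym2.map Subtype.val '' T) ∪ edgeBoundary G C := by
    rintro ⟨A, B⟩
    have hfiber : φ ⁻¹' {(A, B)} = A.supp ∩ B.supp := by
      ext w
      simp [φ, Prod.ext_iff]
    rw [hfiber, Set.image_inter Subtype.val_injective]
    refine (edgeBoundary_inter_subset _ _).trans (Set.union_subset
      ((edgeBoundary_image_supp_subset R A).trans (Set.union_subset_union_left _ ?_))
      ((edgeBoundary_image_supp_subset T B).trans (Set.union_subset_union_left _ ?_)))
    exacts [Set.subset_union_left, Set.subset_union_right]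
  have hinj := hC.injective_of_card_eq_four hι hφ hE hbd
  refine ⟨(Nat.card_eq_of_bijective φ ⟨hinj, hφ⟩).trans (by rw [Nat.card_eq_fintype_card, hι]),
    fun v => ?_⟩
  rw [Nat.card_coe_set_eq, ncard_neighborSet_induce]
  exact hC.ncard_neighborSet_inter_eq_two hι ⟨hinj, hφ⟩ hE hbd v

end IsFourCutSide


lemma CycleSeparating.isFourCutSide {V : Type} [Finite V] {G : SimpleGraph V}
    {S : Set (Sym2 V)} (hcubic : IsCubic G) (h4 : CyclicallyEdgeConnected G 4)
    (hS : CycleSeparating G S) (hcard : Nat.card S = 4) (c : (G.deleteEdges S).ConnectedComponent) :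
    IsFourCutSide G c.supp :=
  ⟨hcubic, h4, hS.exists_isCycle_forall_notMem_supp c,
    (Set.ncard_le_ncard (edgeBoundary_supp_subset c)).trans (by rw [← Nat.card_coe_set_eq, hcard])⟩

theorem stmt_14_general {V : Type} [Fintype V] (G : SimpleGraph V)
    (hcubic : IsCubic G) (h4 : CyclicallyEdgeConnected G 4)
    (S : Set (Sym2 V)) (hS : CycleSeparating G S) (hcard : Nat.card S = 4)
    (c : (G.deleteEdges S).ConnectedComponent) :
    (∀ R T : Set (Sym2 c.supp),
      R ⊆ ((G.deleteEdges S).induce c.supp).edgeSet →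
      T ⊆ ((G.deleteEdges S).induce c.supp).edgeSet →
      Nat.card R = 2 → Nat.card T = 2 →
      ¬ (((G.deleteEdges S).induce c.supp).deleteEdges R).Connected →
      ¬ (((G.deleteEdges S).induce c.supp).deleteEdges T).Connected →
      NontrivialCut ((G.deleteEdges S).induce c.supp) R →
      NontrivialCut ((G.deleteEdges S).induce c.supp) T →
      ComparableCuts ((G.deleteEdges S).induce c.supp) R T) ∨
    (Nat.card c.supp = 4 ∧
      ∀ v : c.supp, Nat.card (((G.deleteEdges S).induce c.supp).neighborSet v) = 2) := by
  rw [hS.induce_supp_deleteEdges h4 hcard c]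
  refine or_iff_not_imp_left.mpr fun h => ?_
  push Not at h
  obtain ⟨R, T, -, -, hR, hT, hRdis, hTdis, -, -, hRT⟩ := h
  rw [Nat.card_coe_set_eq] at hR hT
  exact (hS.isFourCutSide hcubic h4 hcard c).card_eq_four_of_not_comparableCuts
    c.nonempty_supp hR.le hT.le hRdis hTdis hRT

/-- Let `G` be a cyclically 4-edge-connected cubic graph, `S` a
cycle-separating 4-edge-cut and `K` a component of `G - S`. Then any two nontrivial
2-edge-cuts of `K` are comparable, or `K` is a cycle of length 4. -/
theorem stmt_14 {V : Type} [Fintype V] (G : SimpleGraph V)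
    (hconn : G.Connected) (hcubic : IsCubic G) (h4 : CyclicallyEdgeConnected G 4)
    (S : Set (Sym2 V)) (hS : CycleSeparating G S) (hcard : Nat.card S = 4)
    (c : (G.deleteEdges S).ConnectedComponent) :
    (∀ R T : Set (Sym2 c.supp),
      R ⊆ ((G.deleteEdges S).induce c.supp).edgeSet →
      T ⊆ ((G.deleteEdges S).induce c.supp).edgeSet →
      Nat.card R = 2 → Nat.card T = 2 →
      ¬ (((G.deleteEdges S).induce c.supp).deleteEdges R).Connected →
      ¬ (((G.deleteEdges S).induce c.supp).deleteEdges T).Connected →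
      NontrivialCut ((G.deleteEdges S).induce c.supp) R →
      NontrivialCut ((G.deleteEdges S).induce c.supp) T →
      ComparableCuts ((G.deleteEdges S).induce c.supp) R T) ∨
    (Nat.card c.supp = 4 ∧
      ∀ v : c.supp, Nat.card (((G.deleteEdges S).induce c.supp).neighborSet v) = 2) :=
  stmt_14_general G hcubic h4 S hS hcard c
end
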